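/- arXiv:1003.6004 — 2 statements merged into one kernel-verified Lean document; each statement's English description precedes it below -/
import Mathlib

section
/- Systolic comparison for fibered deformations (Proposition 1, inequality part): let Σ₀ = {H₀ = 1} have Reeb flow periodic with period equal to sys(Σ₀), and let Σ = {H = 1} with {H, H₀} = 0. Assume vol(Σ) = vol(Σ₀) after rescaling. Then sys(Σ) ≤ sys(Σ₀), and hence 𝔖(Σ) ≥ 𝔖(Σ₀). -/
open Real MeasureTheory intervalIntegral

noncomputable section

abbrev V (n : ℕ) := (Fin n → ℝ) × (Fin n → ℝ)

def pdq {n : ℕ} (F : V n → ℝ) (x : V n) (i : Fin n) : ℝ :=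
  fderiv ℝ F x (Pi.single i 1, 0)

def pdp {n : ℕ} (F : V n → ℝ) (x : V n) (i : Fin n) : ℝ :=
  fderiv ℝ F x (0, Pi.single i 1)

/-- Hamiltonian vector field `X_H = (∂H/∂p, -∂H/∂q)`. -/
def XH {n : ℕ} (H : V n → ℝ) (x : V n) : V n :=
  (fun i => pdp H x i, fun i => - pdq H x i)

/-- Poisson bracket. -/
def poisson {n : ℕ} (F G : V n → ℝ) (x : V n) : ℝ :=
  ∑ i, (pdq F x i * pdp G x i - pdp F x i * pdq G x i)

/-- Liouville 1-form `α = ½ Σᵢ (pᵢ dqᵢ − qᵢ dpᵢ)`. -/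
def alphaF {n : ℕ} (x v : V n) : ℝ := (1 / 2) * ∑ i, (x.2 i * v.1 i - x.1 i * v.2 i)

/-- The set of actions `∫_γ α` of closed characteristics of the starshaped
hypersurface `Σ = {H = 1}` (periodic orbits of `X_H` on `{H = 1}`). -/
def actions (n : ℕ) (H : V n → ℝ) : Set ℝ :=
  {A | ∃ (T : ℝ) (γ : ℝ → V n), 0 < T ∧
    (∀ t : ℝ, HasDerivAt γ (XH H (γ t)) t) ∧
    (∀ t : ℝ, H (γ t) = 1) ∧ γ T = γ 0 ∧
    A = ∫ t in (0 : ℝ)..T, alphaF (γ t) (deriv γ t)}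

/-- The systole `sys(Σ)`: infimum of actions of closed characteristics of
`Σ = {H = 1}`. -/
def sys (n : ℕ) (H : V n → ℝ) : ℝ := sInf (actions n H)

/-- The contact volume of `Σ = {H = 1}`, `vol(Σ) = (1/n!)∫_Σ α∧(dα)^{n-1}`; for a
starshaped hypersurface this equals (by Stokes) the Lebesgue volume of the
enclosed domain `{H ≤ 1}`. -/
def vol (n : ℕ) (H : V n → ℝ) : ℝ := (volume {x : V n | H x ≤ 1}).toReal

/-- The systolic volume `𝔖(Σ) = vol(Σ)/sys(Σ)ⁿ`. -/
def SV (n : ℕ) (H : V n → ℝ) : ℝ := vol n H / (sys n H) ^ n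

/-- decomposition of a vector in `V n` -/
lemma vec_decomp {n : ℕ} (v : V n) :
    v = (∑ i, v.1 i • (((Pi.single i 1 : Fin n → ℝ), (0 : Fin n → ℝ)) : V n))
      + ∑ i, v.2 i • (((0 : Fin n → ℝ), (Pi.single i 1 : Fin n → ℝ)) : V n) := by
  ext j
  · simp [Prod.fst_sum, Finset.sum_apply, Pi.single_apply, mul_ite]
  · simp [Prod.snd_sum, Finset.sum_apply, Pi.single_apply, mul_ite]

lemma clm_decomp {n : ℕ} (L : V n →L[ℝ] ℝ) (v : V n) :
    L v = ∑ i, (v.1 i * L ((Pi.single i 1 : Fin n → ℝ), (0 : Fin n → ℝ))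
      + v.2 i * L ((0 : Fin n → ℝ), (Pi.single i 1 : Fin n → ℝ))) := by
  conv_lhs => rw [vec_decomp v]
  rw [map_add, map_sum, map_sum, Finset.sum_add_distrib]
  simp only [L.map_smul, smul_eq_mul]

lemma fderiv_eq_sum {n : ℕ} {F : V n → ℝ} {x : V n} (v : V n) :
    fderiv ℝ F x v = ∑ i, (v.1 i * pdq F x i + v.2 i * pdp F x i) :=
  clm_decomp (fderiv ℝ F x) v

lemma fderiv_XH {n : ℕ} {F G : V n → ℝ} {x : V n} :
    fderiv ℝ F x (XH G x) = poisson F G x := by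
  rw [fderiv_eq_sum (XH G x)]
  simp only [XH, poisson]
  exact Finset.sum_congr rfl (fun i _ => by ring)

lemma fderiv_self_XH {n : ℕ} {F : V n → ℝ} {x : V n} :
    fderiv ℝ F x (XH F x) = 0 := by
  rw [fderiv_XH]
  simp [poisson, mul_comm]

section Homog

variable {n : ℕ} {F : V n → ℝ}

lemma hom_zero (hhom : ∀ l : ℝ, 0 < l → ∀ x, F (l • x) = l ^ 2 * F x) : F 0 = 0 := by
  have h := hhom 2 (by norm_num) 0
  rw [smul_zero] at h; nlinarith

lemma contDiffAt_of (hsm : ContDiffOn ℝ (⊤ : ℕ∞) F {(0 : V n)}ᶜ) {x : V n} (hx : x ≠ 0) :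
    ContDiffAt ℝ (⊤ : ℕ∞) F x :=
  hsm.contDiffAt (isOpen_compl_singleton.mem_nhds hx)

lemma diffAt (hsm : ContDiffOn ℝ (⊤ : ℕ∞) F {(0 : V n)}ᶜ) {x : V n} (hx : x ≠ 0) :
    DifferentiableAt ℝ F x :=
  (contDiffAt_of hsm hx).differentiableAt (by simp)

lemma euler (hsm : ContDiffOn ℝ (⊤ : ℕ∞) F {(0 : V n)}ᶜ)
    (hhom : ∀ l : ℝ, 0 < l → ∀ x, F (l • x) = l ^ 2 * F x)
    {x : V n} (hx : x ≠ 0) : fderiv ℝ F x x = 2 * F x := by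
  have hc : HasDerivAt (fun l : ℝ => l • x) x 1 := by
    simpa using (hasDerivAt_id (1 : ℝ)).smul_const x
  have h1 : HasDerivAt (fun l : ℝ => F (l • x)) (fderiv ℝ F x x) 1 := by
    have hF : HasFDerivAt F (fderiv ℝ F x) ((1 : ℝ) • x) := by
      rw [one_smul]; exact (diffAt hsm hx).hasFDerivAt
    exact hF.comp_hasDerivAt 1 hc
  have h2 : (fun l : ℝ => F (l • x)) =ᶠ[nhds 1] fun l => l ^ 2 * F x := by
    filter_upwards [eventually_gt_nhds zero_lt_one] with l hl
    exact hhom l hl x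
  have h3 : HasDerivAt (fun l : ℝ => l ^ 2 * F x) (2 * F x) 1 := by
    simpa using (hasDerivAt_pow 2 (1 : ℝ)).mul_const (F x)
  exact (h1.congr_of_eventuallyEq h2.symm).unique h3

lemma fderiv_homog (hsm : ContDiffOn ℝ (⊤ : ℕ∞) F {(0 : V n)}ᶜ)
    (hhom : ∀ l : ℝ, 0 < l → ∀ x, F (l • x) = l ^ 2 * F x)
    {x : V n} (hx : x ≠ 0) {c : ℝ} (hc : 0 < c) (v : V n) :
    fderiv ℝ F (c • x) v = c * fderiv ℝ F x v := by
  have hc' : c ≠ 0 := ne_of_gt hc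
  set A : V n →L[ℝ] V n := c⁻¹ • ContinuousLinearMap.id ℝ (V n) with hA
  have hAy : ∀ y : V n, A y = c⁻¹ • y := fun y => by simp [hA]
  have hFeq : (fun y => c ^ 2 * F (A y)) = F := by
    funext y
    rw [hAy y, hhom c⁻¹ (by positivity) y]
    field_simp
  have hAx : HasFDerivAt F (fderiv ℝ F x) (A (c • x)) := by
    rw [hAy, smul_smul, inv_mul_cancel₀ hc', one_smul]
    exact (diffAt hsm hx).hasFDerivAt
  have hcomp : HasFDerivAt (fun y => F (A y)) ((fderiv ℝ F x).comp A) (c • x) :=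
    hAx.comp (c • x) (A.hasFDerivAt (x := c • x))
  have hmul : HasFDerivAt (fun y => c ^ 2 * F (A y)) ((c ^ 2 : ℝ) • (fderiv ℝ F x).comp A)
      (c • x) := hcomp.const_mul _
  rw [hFeq] at hmul
  rw [hmul.fderiv, ContinuousLinearMap.smul_apply, ContinuousLinearMap.comp_apply, hAy,
    (fderiv ℝ F x).map_smul]
  simp only [smul_eq_mul]
  field_simp

lemma XH_homog (hsm : ContDiffOn ℝ (⊤ : ℕ∞) F {(0 : V n)}ᶜ)
    (hhom : ∀ l : ℝ, 0 < l → ∀ x, F (l • x) = l ^ 2 * F x)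
    {x : V n} (hx : x ≠ 0) {c : ℝ} (hc : 0 < c) :
    XH F (c • x) = c • XH F x := by
  have h1 := fun i => fderiv_homog hsm hhom hx hc ((0 : Fin n → ℝ), (Pi.single i 1 : Fin n → ℝ))
  have h2 := fun i => fderiv_homog hsm hhom hx hc ((Pi.single i 1 : Fin n → ℝ), (0 : Fin n → ℝ))
  ext i
  · simp [XH, pdp, h1 i, Prod.smul_fst]
  · simp only [XH, Prod.smul_snd, Pi.smul_apply, smul_eq_mul, pdq] at *
    rw [h2 i]
    ring

lemma alphaF_XH (hsm : ContDiffOn ℝ (⊤ : ℕ∞) F {(0 : V n)}ᶜ)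
    (hhom : ∀ l : ℝ, 0 < l → ∀ x, F (l • x) = l ^ 2 * F x)
    {x : V n} (hx : x ≠ 0) : alphaF x (XH F x) = F x := by
  have he := euler hsm hhom hx
  rw [fderiv_eq_sum x] at he
  simp only [alphaF, XH]
  have h : ∑ i, (x.2 i * pdp F x i - x.1 i * (- pdq F x i))
      = ∑ i, (x.1 i * pdq F x i + x.2 i * pdp F x i) :=
    Finset.sum_congr rfl fun i _ => by ring
  rw [h, he]
  ring

lemma XH_ne_zero (hsm : ContDiffOn ℝ (⊤ : ℕ∞) F {(0 : V n)}ᶜ)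
    (hpos : ∀ x : V n, x ≠ 0 → 0 < F x)
    (hhom : ∀ l : ℝ, 0 < l → ∀ x, F (l • x) = l ^ 2 * F x)
    {x : V n} (hx : x ≠ 0) : XH F x ≠ 0 := by
  intro h
  have he := euler hsm hhom hx
  rw [fderiv_eq_sum x] at he
  have h1 : ∀ i, pdp F x i = 0 := fun i => congrFun (congrArg Prod.fst h) i
  have h2 : ∀ i, pdq F x i = 0 := by
    intro i
    have := congrFun (congrArg Prod.snd h) i
    simpa [XH] using this
  have hz : (2 : ℝ) * F x = 0 := by
    rw [← he]
    exact Finset.sum_eq_zero fun i _ => by simp [h1 i, h2 i]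
  nlinarith [hpos x hx]

end Homog

section Geom

variable {n : ℕ} {F : V n → ℝ}

lemma exists_ne_zero (hn : 0 < n) : ∃ x : V n, x ≠ 0 := by
  refine ⟨(Pi.single ⟨0, hn⟩ 1, 0), fun h => ?_⟩
  have := congrFun (congrArg Prod.fst h) ⟨0, hn⟩
  simp at this

lemma sphere_nonempty' (hn : 0 < n) : (Metric.sphere (0 : V n) 1).Nonempty := by
  obtain ⟨x, hx⟩ := exists_ne_zero hn
  have hnx : ‖x‖ ≠ 0 := norm_ne_zero_iff.mpr hx
  exact ⟨‖x‖⁻¹ • x, by simp [mem_sphere_zero_iff_norm, norm_smul, inv_mul_cancel₀ hnx]⟩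

lemma continuousOn_F (hsm : ContDiffOn ℝ (⊤ : ℕ∞) F {(0 : V n)}ᶜ) :
    ContinuousOn F {(0 : V n)}ᶜ := hsm.continuousOn

lemma bound_up (hn : 0 < n) (hsm : ContDiffOn ℝ (⊤ : ℕ∞) F {(0 : V n)}ᶜ)
    (hpos : ∀ x : V n, x ≠ 0 → 0 < F x)
    (hhom : ∀ l : ℝ, 0 < l → ∀ x, F (l • x) = l ^ 2 * F x) :
    ∃ M > 0, ∀ x : V n, F x ≤ M * ‖x‖ ^ 2 := by
  have hcs : IsCompact (Metric.sphere (0 : V n) 1) := isCompact_sphere 0 1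
  have hsub : Metric.sphere (0 : V n) 1 ⊆ {(0 : V n)}ᶜ := fun y hy => by
    simp only [mem_sphere_zero_iff_norm] at hy
    simp only [Set.mem_compl_iff, Set.mem_singleton_iff]
    intro h; rw [h] at hy; simp at hy
  obtain ⟨z, hz, hzmax⟩ := hcs.exists_isMaxOn (sphere_nonempty' hn)
    ((continuousOn_F hsm).mono hsub)
  refine ⟨F z, hpos z (fun h => by simp [h, mem_sphere_zero_iff_norm] at hz), fun x => ?_⟩
  rcases eq_or_ne x 0 with rfl | hx
  · simp [hom_zero hhom]
  · have hnx : 0 < ‖x‖ := norm_pos_iff.mpr hx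
    have hu : ‖x‖⁻¹ • x ∈ Metric.sphere (0 : V n) 1 := by
      simp [mem_sphere_zero_iff_norm, norm_smul, inv_mul_cancel₀ hnx.ne']
    have hxe : F x = ‖x‖ ^ 2 * F (‖x‖⁻¹ • x) := by
      conv_lhs => rw [show x = ‖x‖ • (‖x‖⁻¹ • x) by rw [smul_smul, mul_inv_cancel₀ hnx.ne', one_smul]]
      exact hhom ‖x‖ hnx _
    rw [hxe]
    have h2 : F (‖x‖⁻¹ • x) ≤ F z := hzmax hu
    nlinarith [sq_nonneg ‖x‖]

lemma bound_low (hn : 0 < n) (hsm : ContDiffOn ℝ (⊤ : ℕ∞) F {(0 : V n)}ᶜ)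
    (hpos : ∀ x : V n, x ≠ 0 → 0 < F x)
    (hhom : ∀ l : ℝ, 0 < l → ∀ x, F (l • x) = l ^ 2 * F x) :
    ∃ c > 0, ∀ x : V n, c * ‖x‖ ^ 2 ≤ F x := by
  have hcs : IsCompact (Metric.sphere (0 : V n) 1) := isCompact_sphere 0 1
  have hsub : Metric.sphere (0 : V n) 1 ⊆ {(0 : V n)}ᶜ := fun y hy => by
    simp only [mem_sphere_zero_iff_norm] at hy
    simp only [Set.mem_compl_iff, Set.mem_singleton_iff]
    intro h; rw [h] at hy; simp at hy
  obtain ⟨z, hz, hzmin⟩ := hcs.exists_isMinOn (sphere_nonempty' hn)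
    ((continuousOn_F hsm).mono hsub)
  refine ⟨F z, hpos z (fun h => by simp [h, mem_sphere_zero_iff_norm] at hz), fun x => ?_⟩
  rcases eq_or_ne x 0 with rfl | hx
  · simp [hom_zero hhom]
  · have hnx : 0 < ‖x‖ := norm_pos_iff.mpr hx
    have hu : ‖x‖⁻¹ • x ∈ Metric.sphere (0 : V n) 1 := by
      simp [mem_sphere_zero_iff_norm, norm_smul, inv_mul_cancel₀ hnx.ne']
    have hxe : F x = ‖x‖ ^ 2 * F (‖x‖⁻¹ • x) := by
      conv_lhs => rw [show x = ‖x‖ • (‖x‖⁻¹ • x) by rw [smul_smul, mul_inv_cancel₀ hnx.ne', one_smul]]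
      exact hhom ‖x‖ hnx _
    rw [hxe]
    have h2 : F z ≤ F (‖x‖⁻¹ • x) := hzmin hu
    nlinarith [sq_nonneg ‖x‖]

end Geom

section Geom2

variable {n : ℕ} {F : V n → ℝ}
  (hn : 0 < n) (hsm : ContDiffOn ℝ (⊤ : ℕ∞) F {(0 : V n)}ᶜ)
  (hpos : ∀ x : V n, x ≠ 0 → 0 < F x)
  (hhom : ∀ l : ℝ, 0 < l → ∀ x, F (l • x) = l ^ 2 * F x)

include hn hsm hpos hhom

lemma level_subset_annulus :
    ∃ r R : ℝ, 0 < r ∧ 0 < R ∧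
      ∀ x : V n, F x = 1 → r ≤ ‖x‖ ∧ ‖x‖ ≤ R := by
  obtain ⟨M, hM, hMle⟩ := bound_up hn hsm hpos hhom
  obtain ⟨c, hc, hcle⟩ := bound_low hn hsm hpos hhom
  refine ⟨(Real.sqrt M)⁻¹, (Real.sqrt c)⁻¹, by positivity, by positivity, fun x hx => ?_⟩
  have h1 := hMle x
  have h2 := hcle x
  rw [hx] at h1 h2
  have hsM : (0:ℝ) < Real.sqrt M := Real.sqrt_pos.mpr hM
  have hsc : (0:ℝ) < Real.sqrt c := Real.sqrt_pos.mpr hc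
  have hM2 : Real.sqrt M ^ 2 = M := Real.sq_sqrt hM.le
  have hc2 : Real.sqrt c ^ 2 = c := Real.sq_sqrt hc.le
  constructor
  · by_contra h
    push_neg at h
    have h3 : ‖x‖ * Real.sqrt M < 1 := by
      rw [inv_eq_one_div] at h
      exact (lt_div_iff₀ hsM).mp h
    nlinarith [norm_nonneg x, mul_nonneg (norm_nonneg x) hsM.le]
  · by_contra h
    push_neg at h
    have h3 : 1 < ‖x‖ * Real.sqrt c := by
      rw [inv_eq_one_div] at h
      exact (div_lt_iff₀ hsc).mp h
    nlinarith [norm_nonneg x, mul_nonneg (norm_nonneg x) hsc.le]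

lemma isCompact_level : IsCompact {x : V n | F x = 1} := by
  obtain ⟨r, R, hr, hR, hann⟩ := level_subset_annulus hn hsm hpos hhom
  have hclosed : IsClosed ((Metric.closedBall (0 : V n) R \ Metric.ball (0 : V n) r) ∩ F ⁻¹' {1}) := by
    apply ContinuousOn.preimage_isClosed_of_isClosed
    · apply (continuousOn_F hsm).mono
      intro y hy
      simp only [Set.mem_diff, Metric.mem_closedBall, Metric.mem_ball, dist_zero_right] at hy
      simp only [Set.mem_compl_iff, Set.mem_singleton_iff]
      intro h
      rw [h] at hy
      simp at hy
      linarith [hy.2]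
    · exact (Metric.isClosed_closedBall).sdiff Metric.isOpen_ball
    · exact isClosed_singleton
  have hset : {x : V n | F x = 1}
      = (Metric.closedBall (0 : V n) R \ Metric.ball (0 : V n) r) ∩ F ⁻¹' {1} := by
    ext x
    simp only [Set.mem_setOf_eq, Set.mem_inter_iff, Set.mem_diff, Metric.mem_closedBall,
      Metric.mem_ball, dist_zero_right, Set.mem_preimage, Set.mem_singleton_iff]
    constructor
    · intro hx
      obtain ⟨ha, hb⟩ := hann x hx
      exact ⟨⟨hb, not_lt.mpr ha⟩, hx⟩
    · exact fun hx => hx.2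
  rw [hset]
  exact (isCompact_closedBall (0 : V n) R).of_isClosed_subset hclosed
    (fun x hx => hx.1.1)

lemma level_nonempty : {x : V n | F x = 1}.Nonempty := by
  obtain ⟨x, hx⟩ := exists_ne_zero hn
  have hFx : 0 < F x := hpos x hx
  refine ⟨(Real.sqrt (F x))⁻¹ • x, ?_⟩
  have hs : (0:ℝ) < Real.sqrt (F x) := Real.sqrt_pos.mpr hFx
  simp only [Set.mem_setOf_eq]
  rw [hhom _ (by positivity) x]
  rw [inv_pow, Real.sq_sqrt hFx.le, inv_mul_cancel₀ hFx.ne']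

omit hn hsm hpos in
lemma level_ne_zero {x : V n} (hx : F x = 1) : x ≠ 0 := by
  intro h
  rw [h, hom_zero hhom] at hx
  exact one_ne_zero hx.symm

lemma sublevel_volume_pos : 0 < volume {x : V n | F x ≤ 1} := by
  obtain ⟨M, hM, hMle⟩ := bound_up hn hsm hpos hhom
  have hsub : Metric.closedBall (0 : V n) (Real.sqrt M)⁻¹ ⊆ {x : V n | F x ≤ 1} := by
    intro x hx
    simp only [Metric.mem_closedBall, dist_zero_right] at hx
    simp only [Set.mem_setOf_eq]
    have hsM : (0:ℝ) < Real.sqrt M := Real.sqrt_pos.mpr hM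
    have hM2 : Real.sqrt M ^ 2 = M := Real.sq_sqrt hM.le
    have := hMle x
    have hx2 : ‖x‖ ^ 2 ≤ ((Real.sqrt M)⁻¹) ^ 2 := by
      apply pow_le_pow_left₀ (norm_nonneg x) hx
    rw [inv_pow, hM2] at hx2
    calc F x ≤ M * ‖x‖ ^ 2 := this
    _ ≤ M * M⁻¹ := by nlinarith
    _ = 1 := mul_inv_cancel₀ hM.ne'
  calc (0 : ENNReal) < volume (Metric.closedBall (0 : V n) (Real.sqrt M)⁻¹) :=
        Metric.measure_closedBall_pos _ _ (by positivity)
  _ ≤ volume {x : V n | F x ≤ 1} := measure_mono hsub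

lemma sublevel_volume_lt_top {a : ℝ} (ha : 0 < a) : volume {x : V n | F x ≤ a} < ⊤ := by
  obtain ⟨c, hc, hcle⟩ := bound_low hn hsm hpos hhom
  have hsub : {x : V n | F x ≤ a} ⊆ Metric.closedBall (0 : V n) (Real.sqrt (a / c)) := by
    intro x hx
    simp only [Set.mem_setOf_eq] at hx
    simp only [Metric.mem_closedBall, dist_zero_right]
    have h1 : c * ‖x‖ ^ 2 ≤ a := le_trans (hcle x) hx
    have h2 : ‖x‖ ^ 2 ≤ a / c := by
      rw [le_div_iff₀ hc]; linarith [mul_comm c (‖x‖ ^ 2)]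
    calc ‖x‖ = Real.sqrt (‖x‖ ^ 2) := (Real.sqrt_sq (norm_nonneg x)).symm
    _ ≤ Real.sqrt (a / c) := Real.sqrt_le_sqrt h2
  exact lt_of_le_of_lt (measure_mono hsub) measure_closedBall_lt_top

end Geom2

open Pointwise

instance haarV (n : ℕ) : (volume : Measure (V n)).IsAddHaarMeasure :=
  Measure.prod.instIsAddHaarMeasure _ _

lemma finrank_V (n : ℕ) : Module.finrank ℝ (V n) = 2 * n := by
  simp [Module.finrank_prod]; ring

section MaxPoint

variable {n : ℕ} {H₀ H : V n → ℝ}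

lemma exists_max_ge_one (hn : 0 < n)
    (hsm₀ : ContDiffOn ℝ (⊤ : ℕ∞) H₀ {(0 : V n)}ᶜ)
    (hpos₀ : ∀ x : V n, x ≠ 0 → 0 < H₀ x)
    (hhom₀ : ∀ l : ℝ, 0 < l → ∀ x, H₀ (l • x) = l ^ 2 * H₀ x)
    (hsm : ContDiffOn ℝ (⊤ : ℕ∞) H {(0 : V n)}ᶜ)
    (hpos : ∀ x : V n, x ≠ 0 → 0 < H x)
    (hhom : ∀ l : ℝ, 0 < l → ∀ x, H (l • x) = l ^ 2 * H x)
    (hvol : vol n H = vol n H₀) :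
    ∃ x₀ : V n, H₀ x₀ = 1 ∧ 1 ≤ H x₀ ∧ ∀ y, H₀ y = 1 → H y ≤ H x₀ := by
  have hcpt := isCompact_level hn hsm₀ hpos₀ hhom₀
  have hne := level_nonempty hn hsm₀ hpos₀ hhom₀
  have hsub0 : {x : V n | H₀ x = 1} ⊆ {(0 : V n)}ᶜ := fun y hy =>
    level_ne_zero hhom₀ hy
  obtain ⟨x₀, hx₀, hmax⟩ := hcpt.exists_isMaxOn hne ((continuousOn_F hsm).mono hsub0)
  have hx₀1 : H₀ x₀ = 1 := hx₀
  have hx₀ne : x₀ ≠ 0 := level_ne_zero hhom₀ hx₀1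
  set m := H x₀ with hm
  have hmpos : 0 < m := hpos x₀ hx₀ne
  have hmax' : ∀ y, H₀ y = 1 → H y ≤ m := fun y hy => hmax hy
  refine ⟨x₀, hx₀1, ?_, hmax'⟩
  by_contra hlt
  push_neg at hlt
  -- m < 1; derive volume contradiction
  have step1 : ∀ x : V n, H₀ x ≤ m⁻¹ → H x ≤ 1 := by
    intro x hx
    rcases eq_or_ne x 0 with rfl | hxne
    · rw [hom_zero hhom]; norm_num
    · set a := H₀ x with ha
      have hapos : 0 < a := hpos₀ x hxne
      have hsa : (0:ℝ) < Real.sqrt a := Real.sqrt_pos.mpr hapos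
      set θ := (Real.sqrt a)⁻¹ • x with hθ
      have hθ1 : H₀ θ = 1 := by
        rw [hθ, hhom₀ _ (by positivity) x, inv_pow, Real.sq_sqrt hapos.le,
          inv_mul_cancel₀ hapos.ne']
      have hxθ : x = Real.sqrt a • θ := by
        rw [hθ, smul_smul, mul_inv_cancel₀ hsa.ne', one_smul]
      have hHx : H x = a * H θ := by
        conv_lhs => rw [hxθ]
        rw [hhom _ hsa θ, Real.sq_sqrt hapos.le]
      rw [hHx]
      have hHθ : H θ ≤ m := hmax' θ hθ1
      calc a * H θ ≤ a * m := by nlinarith [hpos θ (level_ne_zero hhom₀ hθ1)]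
      _ ≤ m⁻¹ * m := by nlinarith
      _ = 1 := inv_mul_cancel₀ hmpos.ne'
  set b := Real.sqrt m⁻¹ with hb
  have hbpos : (0:ℝ) < b := Real.sqrt_pos.mpr (by positivity)
  have hb2 : b ^ 2 = m⁻¹ := Real.sq_sqrt (by positivity)
  have step2 : {x : V n | H₀ x ≤ m⁻¹} = b • {x : V n | H₀ x ≤ 1} := by
    ext x
    rw [Set.mem_smul_set_iff_inv_smul_mem₀ hbpos.ne']
    simp only [Set.mem_setOf_eq]
    have hH0 : H₀ (b⁻¹ • x) = m * H₀ x := by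
      rw [hhom₀ _ (by positivity) x, inv_pow, hb2, inv_inv]
    rw [hH0]
    constructor
    · intro h
      calc m * H₀ x ≤ m * m⁻¹ := by nlinarith
      _ = 1 := mul_inv_cancel₀ hmpos.ne'
    · intro h
      have h2 : m⁻¹ * (m * H₀ x) ≤ m⁻¹ * 1 :=
        mul_le_mul_of_nonneg_left h (inv_pos.mpr hmpos).le
      rwa [← mul_assoc, inv_mul_cancel₀ hmpos.ne', one_mul, mul_one] at h2
  have step3 : volume {x : V n | H₀ x ≤ m⁻¹}
      = ENNReal.ofReal ((m⁻¹) ^ n) * volume {x : V n | H₀ x ≤ 1} := by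
    rw [step2, Measure.addHaar_smul, finrank_V, abs_of_pos (pow_pos hbpos _),
      pow_mul, hb2]
  have hsubset : {x : V n | H₀ x ≤ m⁻¹} ⊆ {x : V n | H x ≤ 1} := fun x hx => step1 x hx
  have hmono : volume {x : V n | H₀ x ≤ m⁻¹} ≤ volume {x : V n | H x ≤ 1} :=
    measure_mono hsubset
  rw [step3] at hmono
  set A := volume {x : V n | H x ≤ 1} with hA
  set B := volume {x : V n | H₀ x ≤ 1} with hB
  have hAtop : A ≠ ⊤ := (sublevel_volume_lt_top hn hsm hpos hhom one_pos).ne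
  have hBtop : B ≠ ⊤ := (sublevel_volume_lt_top hn hsm₀ hpos₀ hhom₀ one_pos).ne
  have hBpos : 0 < B := sublevel_volume_pos hn hsm₀ hpos₀ hhom₀
  have hfac : (1:ℝ) < (m⁻¹) ^ n := one_lt_pow₀ (one_lt_inv_iff₀.mpr ⟨hmpos, hlt⟩) hn.ne'
  have htoReal : (m⁻¹) ^ n * B.toReal ≤ A.toReal := by
    have h1 : (ENNReal.ofReal ((m⁻¹) ^ n) * B).toReal ≤ A.toReal := by
      apply ENNReal.toReal_mono hAtop hmono
    rwa [ENNReal.toReal_mul, ENNReal.toReal_ofReal (by positivity)] at h1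
  have hBr : 0 < B.toReal := ENNReal.toReal_pos hBpos.ne' hBtop
  have : B.toReal < A.toReal := by nlinarith
  rw [show A.toReal = vol n H from rfl, show B.toReal = vol n H₀ from rfl, hvol] at this
  exact lt_irrefl _ this

end MaxPoint

section Actions

variable {n : ℕ} {F : V n → ℝ}

lemma contOn_XH (hsm : ContDiffOn ℝ (⊤ : ℕ∞) F {(0 : V n)}ᶜ) :
    ContinuousOn (XH F) {(0 : V n)}ᶜ := by
  have hc : ContinuousOn (fun x => fderiv ℝ F x) {(0 : V n)}ᶜ :=
    hsm.continuousOn_fderiv_of_isOpen isOpen_compl_singleton (by simp)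
  unfold XH pdp pdq
  apply ContinuousOn.prodMk
  · apply continuousOn_pi.mpr; intro i
    exact hc.clm_apply continuousOn_const
  · apply continuousOn_pi.mpr; intro i
    exact (hc.clm_apply continuousOn_const).neg

lemma action_eq_period (hsm : ContDiffOn ℝ (⊤ : ℕ∞) F {(0 : V n)}ᶜ)
    (hhom : ∀ l : ℝ, 0 < l → ∀ x, F (l • x) = l ^ 2 * F x)
    {T : ℝ} {γ : ℝ → V n}
    (hγ' : ∀ t : ℝ, HasDerivAt γ (XH F (γ t)) t)
    (hγ1 : ∀ t : ℝ, F (γ t) = 1) :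
    (∫ t in (0 : ℝ)..T, alphaF (γ t) (deriv γ t)) = T := by
  have hne : ∀ t, γ t ≠ 0 := fun t => level_ne_zero hhom (hγ1 t)
  have hd : ∀ t, deriv γ t = XH F (γ t) := fun t => (hγ' t).deriv
  have hval : ∀ t, alphaF (γ t) (deriv γ t) = 1 := by
    intro t
    rw [hd t, alphaF_XH hsm hhom (hne t), hγ1 t]
  simp only [hval]
  simp

lemma period_bound (hn : 0 < n) (hsm : ContDiffOn ℝ (⊤ : ℕ∞) F {(0 : V n)}ᶜ)
    (hpos : ∀ x : V n, x ≠ 0 → 0 < F x)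
    (hhom : ∀ l : ℝ, 0 < l → ∀ x, F (l • x) = l ^ 2 * F x) :
    ∃ τ > (0:ℝ), ∀ (T : ℝ) (γ : ℝ → V n), 0 < T →
      (∀ t : ℝ, HasDerivAt γ (XH F (γ t)) t) →
      (∀ t : ℝ, F (γ t) = 1) → γ T = γ 0 → τ ≤ T := by
  classical
  set S := {x : V n | F x = 1} with hS
  have hcpt : IsCompact S := isCompact_level hn hsm hpos hhom
  have hneS : S.Nonempty := level_nonempty hn hsm hpos hhom
  have hsub : S ⊆ {(0 : V n)}ᶜ := fun y hy => level_ne_zero hhom hy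
  have hXcont : ContinuousOn (XH F) S := (contOn_XH hsm).mono hsub
  have hnormcont : ContinuousOn (fun x => ‖XH F x‖) S := hXcont.norm
  obtain ⟨zmin, hzmin, hmin⟩ := hcpt.exists_isMinOn hneS hnormcont
  obtain ⟨zmax, hzmax, hmax⟩ := hcpt.exists_isMaxOn hneS hnormcont
  set c := ‖XH F zmin‖ with hc
  set C := ‖XH F zmax‖ with hC
  have hcpos : 0 < c := norm_pos_iff.mpr (XH_ne_zero hsm hpos hhom (hsub hzmin))
  have hCpos : 0 < C := lt_of_lt_of_le hcpos (hmin hzmax)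
  have hucont : UniformContinuousOn (XH F) S := hcpt.uniformContinuousOn_of_continuous hXcont
  rw [Metric.uniformContinuousOn_iff] at hucont
  obtain ⟨δ, hδ, hδle⟩ := hucont (c / 2) (by positivity)
  refine ⟨δ / (2 * C), by positivity, fun T γ hT hγ' hγ1 hper => ?_⟩
  by_contra hTlt
  push_neg at hTlt
  have hTC : T * C < δ := by
    rw [lt_div_iff₀ (by positivity : (0:ℝ) < 2 * C)] at hTlt
    nlinarith
  have hmem : ∀ t, γ t ∈ S := fun t => hγ1 t
  have hne : ∀ t, γ t ≠ 0 := fun t => hsub (hmem t)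
  have hγcont : Continuous γ := by
    apply continuous_iff_continuousAt.mpr
    exact fun t => (hγ' t).continuousAt
  set g : ℝ → V n := fun s => XH F (γ s) with hg
  have hgcont : Continuous g := hXcont.comp_continuous hγcont hmem
  have hgbound : ∀ s, ‖g s‖ ≤ C := fun s => hmax (hmem s)
  have hint : ∀ t, (∫ s in (0:ℝ)..t, g s) = γ t - γ 0 := by
    intro t
    apply intervalIntegral.integral_eq_sub_of_hasDerivAt
    · exact fun s _ => hγ' s
    · exact hgcont.intervalIntegrable _ _
  have hdist : ∀ t, 0 ≤ t → t ≤ T → ‖γ t - γ 0‖ ≤ C * t := by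
    intro t ht0 htT
    rw [← hint t]
    have := intervalIntegral.norm_integral_le_of_norm_le_const
      (a := (0:ℝ)) (b := t) (C := C) (f := g) (fun s _ => hgbound s)
    simpa [abs_of_nonneg ht0] using this
  have hgclose : ∀ t, 0 ≤ t → t ≤ T → ‖g t - g 0‖ < c / 2 := by
    intro t ht0 htT
    have h1 : dist (γ t) (γ 0) < δ := by
      rw [dist_eq_norm]
      calc ‖γ t - γ 0‖ ≤ C * t := hdist t ht0 htT
      _ ≤ C * T := by nlinarith
      _ < δ := by nlinarith
    have := hδle (γ t) (hmem t) (γ 0) (hmem 0) h1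
    rwa [dist_eq_norm] at this
  have hzero : (∫ s in (0:ℝ)..T, g s) = 0 := by
    rw [hint T, hper, sub_self]
  have hconst : (∫ s in (0:ℝ)..T, g 0 - g s) = T • g 0 := by
    rw [intervalIntegral.integral_sub (intervalIntegrable_const)
      (hgcont.intervalIntegrable _ _), hzero, sub_zero]
    simp
  have hbnd : ‖(T : ℝ) • g 0‖ ≤ (c / 2) * T := by
    rw [← hconst]
    have := intervalIntegral.norm_integral_le_of_norm_le_const
      (a := (0:ℝ)) (b := T) (C := c / 2) (f := fun s => g 0 - g s)
      (fun s hs => by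
        rw [Set.uIoc_of_le hT.le] at hs
        rw [norm_sub_rev]
        exact (hgclose s hs.1.le hs.2).le)
    simpa [abs_of_nonneg hT.le] using this
  have hlow : c * T ≤ ‖(T : ℝ) • g 0‖ := by
    rw [norm_smul, Real.norm_eq_abs, abs_of_nonneg hT.le]
    have : c ≤ ‖g 0‖ := hmin (hmem 0)
    nlinarith
  nlinarith

end Actions

section Lagrange

variable {n : ℕ} {H₀ H : V n → ℝ}

lemma lagrange_XH (hsm₀ : ContDiffOn ℝ (⊤ : ℕ∞) H₀ {(0 : V n)}ᶜ)
    (hpos₀ : ∀ x : V n, x ≠ 0 → 0 < H₀ x)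
    (hhom₀ : ∀ l : ℝ, 0 < l → ∀ x, H₀ (l • x) = l ^ 2 * H₀ x)
    (hsm : ContDiffOn ℝ (⊤ : ℕ∞) H {(0 : V n)}ᶜ)
    (hhom : ∀ l : ℝ, 0 < l → ∀ x, H (l • x) = l ^ 2 * H x)
    {x : V n} (hx : H₀ x = 1) (hmax : ∀ y, H₀ y = 1 → H y ≤ H x) :
    XH H x = (H x) • XH H₀ x := by
  have hxne : x ≠ 0 := level_ne_zero hhom₀ hx
  have hstrict₀ : HasStrictFDerivAt H₀ (fderiv ℝ H₀ x) x :=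
    (contDiffAt_of hsm₀ hxne).hasStrictFDerivAt (by simp)
  have hstrict : HasStrictFDerivAt H (fderiv ℝ H x) x :=
    (contDiffAt_of hsm hxne).hasStrictFDerivAt (by simp)
  have hextr : IsLocalExtrOn H {y : V n | H₀ y = H₀ x} x := by
    refine Or.inr (IsMaxOn.localize ?_)
    apply isMaxOn_iff.mpr
    intro y hy
    exact hmax y (by rw [Set.mem_setOf_eq] at hy; rw [hy, hx])
  obtain ⟨a, b, hab, heq⟩ :=
    hextr.exists_multipliers_of_hasStrictFDerivAt_1d hstrict₀ hstrict
  have heval : ∀ v, a * fderiv ℝ H₀ x v + b * fderiv ℝ H x v = 0 := by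
    intro v
    have h := congrArg (fun L : V n →L[ℝ] ℝ => L v) heq
    simpa [ContinuousLinearMap.add_apply, ContinuousLinearMap.smul_apply, smul_eq_mul] using h
  have he₀ := euler hsm₀ hhom₀ hxne
  have he := euler hsm hhom hxne
  have hbne : b ≠ 0 := by
    intro hb
    have hane : a ≠ 0 := by
      intro ha; exact hab (by simp [ha, hb, Prod.ext_iff])
    have h2 := heval x
    rw [hb, he₀, hx, zero_mul, add_zero] at h2
    have : a = 0 := by linarith
    exact hane this
  have hax : a = - b * H x := by
    have h2 := heval x
    rw [he₀, he, hx] at h2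
    linear_combination h2 / 2
  have hfd : ∀ v, fderiv ℝ H x v = H x * fderiv ℝ H₀ x v := by
    intro v
    have h2 := heval v
    rw [hax] at h2
    have h3 : b * (fderiv ℝ H x v - H x * fderiv ℝ H₀ x v) = 0 := by
      linear_combination h2
    rcases mul_eq_zero.mp h3 with h | h
    · exact absurd h hbne
    · linarith
  ext i
  · show pdp H x i = (H x • XH H₀ x).1 i
    simp only [XH, Prod.smul_fst, Pi.smul_apply, smul_eq_mul, pdp]
    exact hfd _
  · show - pdq H x i = (H x • XH H₀ x).2 i
    simp only [XH, Prod.smul_snd, Pi.smul_apply, smul_eq_mul, pdq]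
    rw [hfd _]
    ring

end Lagrange

section Flow

variable {n : ℕ} {H₀ : V n → ℝ}

set_option maxHeartbeats 2000000 in
lemma global_flow (hn : 0 < n) (hsm₀ : ContDiffOn ℝ (⊤ : ℕ∞) H₀ {(0 : V n)}ᶜ)
    (hpos₀ : ∀ x : V n, x ≠ 0 → 0 < H₀ x)
    (hhom₀ : ∀ l : ℝ, 0 < l → ∀ x, H₀ (l • x) = l ^ 2 * H₀ x)
    {x₀ : V n} (hx₀ : H₀ x₀ = 1) :
    ∃ γ : ℝ → V n, γ 0 = x₀ ∧ (∀ t : ℝ, HasDerivAt γ (XH H₀ (γ t)) t) ∧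
      (∀ t : ℝ, H₀ (γ t) = 1) := by
  classical
  obtain ⟨M, hM, hMle⟩ := bound_up hn hsm₀ hpos₀ hhom₀
  obtain ⟨c, hc, hcle⟩ := bound_low hn hsm₀ hpos₀ hhom₀
  have h00 : H₀ 0 = 0 := hom_zero hhom₀
  -- continuity of H₀ everywhere
  have hcont0 : Continuous H₀ := by
    apply continuous_iff_continuousAt.mpr
    intro x
    rcases eq_or_ne x 0 with rfl | hx
    · have hb : Filter.Tendsto H₀ (nhds (0 : V n)) (nhds 0) := by
        apply squeeze_zero (fun y => (by
          rcases eq_or_ne y 0 with rfl | hy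
          · rw [h00]
          · exact (hpos₀ y hy).le)) hMle
        have : Filter.Tendsto (fun y : V n => M * ‖y‖ ^ 2) (nhds 0) (nhds (M * ‖(0:V n)‖ ^ 2)) := by
          apply Filter.Tendsto.const_mul
          exact ((continuous_norm.pow 2).tendsto _)
        simpa using this
      unfold ContinuousAt
      rwa [h00]
    · exact ((continuousOn_F hsm₀) x hx).continuousAt (isOpen_compl_singleton.mem_nhds hx)
  -- the cutoff
  set ψ : ContDiffBump (1 : ℝ) := ⟨1/4, 1/2, by norm_num, by norm_num⟩ with hψ
  set Y : V n → V n := fun x => ψ (H₀ x) • XH H₀ x with hY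
  have hY1 : ∀ x : V n, |H₀ x - 1| ≤ 1/4 → Y x = XH H₀ x := by
    intro x hx
    have : ψ (H₀ x) = 1 := ψ.one_of_mem_closedBall (by
      simpa [Metric.mem_closedBall, Real.dist_eq, hψ] using hx)
    rw [hY]; simp only [this, one_smul]
  have hYzero : ∀ x : V n, 1/2 ≤ |H₀ x - 1| → Y x = 0 := by
    intro x hx
    have hns : H₀ x ∉ Function.support ψ := by
      rw [ψ.support_eq]
      simp only [Metric.mem_ball, Real.dist_eq, hψ, not_lt]
      exact hx
    have : ψ (H₀ x) = 0 := Function.notMem_support.mp hns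
    rw [hY]; simp only [this, zero_smul]
  -- smoothness of Y
  have hfd : ContDiffOn ℝ 1 (fun y : V n => fderiv ℝ H₀ y) {(0 : V n)}ᶜ :=
    hsm₀.fderiv_of_isOpen isOpen_compl_singleton (WithTop.coe_le_coe.mpr le_top)
  have hXHsm : ContDiffOn ℝ 1 (XH H₀) {(0 : V n)}ᶜ := by
    unfold XH pdp pdq
    apply ContDiffOn.prodMk
    · apply contDiffOn_pi.mpr; intro i
      exact hfd.clm_apply contDiffOn_const
    · apply contDiffOn_pi.mpr; intro i
      exact (hfd.clm_apply contDiffOn_const).neg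
  have hψH : ContDiffOn ℝ 1 (fun x : V n => ψ (H₀ x)) {(0 : V n)}ᶜ :=
    (ψ.contDiff (n := 1)).comp_contDiffOn (hsm₀.of_le (by simp))
  have hYon : ContDiffOn ℝ 1 Y {(0 : V n)}ᶜ := hψH.smul hXHsm
  set r₀ : ℝ := (Real.sqrt (4 * M))⁻¹ with hr₀
  have hr₀pos : 0 < r₀ := by positivity
  have hsmall : ∀ x : V n, ‖x‖ < r₀ → Y x = 0 := by
    intro x hx
    apply hYzero
    have h4M : Real.sqrt (4 * M) ^ 2 = 4 * M := Real.sq_sqrt (by positivity)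
    have h1 : H₀ x ≤ M * ‖x‖ ^ 2 := hMle x
    have h2 : ‖x‖ ^ 2 < r₀ ^ 2 := by
      apply sq_lt_sq' _ hx
      linarith [norm_nonneg x, hr₀pos]
    rw [hr₀, inv_pow, h4M] at h2
    have h3 : H₀ x < M * (4 * M)⁻¹ := by nlinarith
    have h4 : M * (4 * M)⁻¹ = 4⁻¹ := by field_simp
    have h5 : H₀ x ≥ 0 := by
      rcases eq_or_ne x 0 with rfl | hxne
      · rw [h00]
      · exact (hpos₀ x hxne).le
    rw [h4] at h3
    rw [abs_sub_comm, abs_of_pos (by linarith)]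
    linarith
  have hYsm : ContDiff ℝ 1 Y := by
    apply contDiff_iff_contDiffAt.mpr
    intro x
    rcases lt_or_ge ‖x‖ r₀ with hlt | hge
    · apply ContDiffAt.congr_of_eventuallyEq (contDiffAt_const (c := (0 : V n)))
      have hopen : IsOpen {y : V n | ‖y‖ < r₀} := isOpen_lt continuous_norm continuous_const
      filter_upwards [hopen.mem_nhds hlt] with y hy
      exact hsmall y hy
    · have hxne : x ≠ 0 := by
        intro h; rw [h] at hge; simp at hge; linarith
      exact hYon.contDiffAt (isOpen_compl_singleton.mem_nhds hxne)
  -- compact support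
  set R' : ℝ := Real.sqrt (2 / c) with hR'
  have hsupp : HasCompactSupport Y := by
    apply HasCompactSupport.intro (isCompact_closedBall (0 : V n) R')
    intro x hx
    simp only [Metric.mem_closedBall, dist_zero_right, not_le] at hx
    apply hYzero
    have hR2 : R' ^ 2 = 2 / c := Real.sq_sqrt (by positivity)
    have h1 : c * ‖x‖ ^ 2 ≤ H₀ x := hcle x
    have h2 : R' ^ 2 < ‖x‖ ^ 2 := by
      apply sq_lt_sq' _ hx
      have : 0 ≤ R' := Real.sqrt_nonneg _
      linarith [norm_nonneg x]
    have h3 : (2:ℝ) < c * ‖x‖ ^ 2 := by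
      rw [hR2] at h2
      have := (div_lt_iff₀ hc).mp h2
      linarith [mul_comm (‖x‖ ^ 2) c]
    have h4 : (2:ℝ) < H₀ x := lt_of_lt_of_le h3 h1
    rw [abs_of_pos (by linarith)]
    linarith
  obtain ⟨K, hK⟩ := hYsm.lipschitzWith_of_hasCompactSupport hsupp one_ne_zero
  obtain ⟨C, hC⟩ := hsupp.exists_bound_of_continuous hYsm.continuous
  have hCnn : 0 ≤ C := le_trans (norm_nonneg _) (hC 0)
  -- solutions on arbitrarily large intervals
  have hexist : ∀ k : ℕ, ∃ f : ℝ → V n, f 0 = x₀ ∧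
      ∀ t ∈ Set.Ioo (-(k+1 : ℝ)) (k+1), HasDerivAt f (Y (f t)) t := by
    intro k
    have h0I : (0:ℝ) ∈ Set.Icc (-(k+1 : ℝ)) (k+1) := by
      constructor <;> [linarith [Nat.cast_nonneg (α := ℝ) k]; positivity]
    have hPL : IsPicardLindelof (fun (_ : ℝ) (x : V n) => Y x)
        (⟨0, h0I⟩ : Set.Icc (-(k+1 : ℝ)) (k+1)) x₀
        ⟨C * (k+1) + 1, by positivity⟩ 0 ⟨C, hCnn⟩ K := by
      apply IsPicardLindelof.of_time_independent
      · exact fun x _ => hC x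
      · exact hK.lipschitzOnWith
      · show C * max ((k+1 : ℝ) - 0) (0 - -(k+1 : ℝ)) ≤ (C * (k+1) + 1) - 0
        have : max ((k+1 : ℝ) - 0) (0 - -(k+1 : ℝ)) = (k+1 : ℝ) := by
          simp
        rw [this]
        linarith
    obtain ⟨f, hf0, hf2⟩ := hPL.exists_eq_forall_mem_Icc_hasDerivWithinAt₀
    refine ⟨f, hf0, fun t ht => ?_⟩
    exact (hf2 t (Set.Ioo_subset_Icc_self ht)).hasDerivAt (Icc_mem_nhds ht.1 ht.2)
  choose sol hsol0 hsol' using hexist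
  -- uniqueness/agreement
  have hagree : ∀ j k : ℕ, j ≤ k → ∀ t ∈ Set.Ioo (-(j+1 : ℝ)) (j+1), sol j t = sol k t := by
    intro j k hjk t ht
    have hjk' : (j : ℝ) + 1 ≤ (k : ℝ) + 1 := add_le_add_left (Nat.cast_le.mpr hjk) 1
    have hsub : Set.Ioo (-(j+1 : ℝ)) (j+1) ⊆ Set.Ioo (-(k+1 : ℝ)) (k+1) :=
      Set.Ioo_subset_Ioo (neg_le_neg hjk') hjk'
    have h0mem : (0:ℝ) ∈ Set.Ioo (-(j+1 : ℝ)) (j+1) := by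
      constructor <;> [linarith [Nat.cast_nonneg (α := ℝ) j]; positivity]
    exact ODE_solution_unique_of_mem_Ioo
      (v := fun (_ : ℝ) (x : V n) => Y x) (s := fun _ => Set.univ)
      (fun _ _ => hK.lipschitzOnWith) h0mem
      (fun s hs => ⟨hsol' j s hs, trivial⟩)
      (fun s hs => ⟨hsol' k s (hsub hs), trivial⟩)
      (by rw [hsol0 j, hsol0 k]) ht
  set γ : ℝ → V n := fun t => sol ⌊|t|⌋₊ t with hγ
  have hmemIoo : ∀ (t : ℝ) (k : ℕ), |t| < k + 1 → t ∈ Set.Ioo (-(k+1 : ℝ)) (k+1) := by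
    intro t k hk
    rcases abs_lt.mp hk with ⟨h1, h2⟩
    exact ⟨by linarith, by linarith⟩
  have hkey : ∀ (t : ℝ) (k : ℕ), |t| < k + 1 → γ t = sol k t := by
    intro t k hk
    have h1 : |t| < (⌊|t|⌋₊ : ℝ) + 1 := Nat.lt_floor_add_one _
    have e1 : sol ⌊|t|⌋₊ t = sol (max ⌊|t|⌋₊ k) t :=
      hagree _ _ (le_max_left _ _) t (hmemIoo t _ h1)
    have e2 : sol k t = sol (max ⌊|t|⌋₊ k) t :=
      hagree _ _ (le_max_right _ _) t (hmemIoo t _ hk)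
    rw [hγ]
    simp only
    rw [e1, e2]
  have hγ0 : γ 0 = x₀ := by
    have : γ 0 = sol 0 0 := hkey 0 0 (by norm_num)
    rw [this, hsol0]
  have hderiv : ∀ t : ℝ, HasDerivAt γ (Y (γ t)) t := by
    intro t
    have h1 : |t| < (⌊|t|⌋₊ : ℝ) + 1 := Nat.lt_floor_add_one _
    have hopen : IsOpen {s : ℝ | |s| < (⌊|t|⌋₊ : ℝ) + 1} :=
      isOpen_lt (continuous_abs) continuous_const
    have hev : γ =ᶠ[nhds t] sol ⌊|t|⌋₊ := by
      filter_upwards [hopen.mem_nhds h1] with s hs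
      exact hkey s ⌊|t|⌋₊ hs
    have hd : HasDerivAt (sol ⌊|t|⌋₊) (Y (sol ⌊|t|⌋₊ t)) t :=
      hsol' _ t (hmemIoo t _ h1)
    have := hd.congr_of_eventuallyEq hev
    rwa [← hkey t _ h1] at this
  have hγcont : Continuous γ :=
    continuous_iff_continuousAt.mpr fun t => (hderiv t).continuousAt
  -- conservation of H₀
  set g : ℝ → ℝ := fun t => H₀ (γ t) with hg
  have hgc : Continuous g := hcont0.comp hγcont
  set E' : Set ℝ := {t | g t = 1} with hE'
  have hclosed : IsClosed E' := isClosed_eq hgc continuous_const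
  have hopenE : IsOpen E' := by
    apply isOpen_iff_mem_nhds.mpr
    intro t₀ ht₀
    have hU : IsOpen (g ⁻¹' Set.Ioo (3/4 : ℝ) (5/4)) := hgc.isOpen_preimage _ isOpen_Ioo
    have ht₀U : t₀ ∈ g ⁻¹' Set.Ioo (3/4 : ℝ) (5/4) := by
      simp only [Set.mem_preimage, Set.mem_Ioo]
      rw [Set.mem_setOf_eq] at ht₀
      rw [ht₀]; norm_num
    obtain ⟨ε, hε, hball⟩ := Metric.isOpen_iff.mp hU t₀ ht₀U
    rw [Real.ball_eq_Ioo] at hball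
    set I := Set.Ioo (t₀ - ε) (t₀ + ε) with hI
    have hIderiv : ∀ s ∈ I, HasDerivAt g 0 s := by
      intro s hs
      have hgs : g s ∈ Set.Ioo (3/4 : ℝ) (5/4) := hball hs
      have hne : γ s ≠ 0 := by
        intro h
        rw [hg] at hgs
        simp only [Set.mem_Ioo] at hgs
        rw [h, h00] at hgs
        linarith [hgs.1]
      have hcomp : HasDerivAt g (fderiv ℝ H₀ (γ s) (Y (γ s))) s :=
        (diffAt hsm₀ hne).hasFDerivAt.comp_hasDerivAt s (hderiv s)
      have hzero : fderiv ℝ H₀ (γ s) (Y (γ s)) = 0 := by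
        show fderiv ℝ H₀ (γ s) ((ψ (H₀ (γ s)) : ℝ) • XH H₀ (γ s)) = 0
        rw [ContinuousLinearMap.map_smul, fderiv_self_XH, smul_zero]
      rwa [hzero] at hcomp
    have hconst : ∀ s ∈ I, g s = g t₀ := by
      intro s hs
      have ht₀I : t₀ ∈ I := by
        rw [hI]; constructor <;> linarith
      apply Convex.is_const_of_fderivWithin_eq_zero (convex_Ioo _ _)
        (fun z hz => ((hIderiv z hz).differentiableAt).differentiableWithinAt)
        ?_ hs ht₀I
      intro z hz
      rw [fderivWithin_of_isOpen isOpen_Ioo hz,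
        (hasDerivAt_iff_hasFDerivAt.mp (hIderiv z hz)).fderiv]
      ext v
      simp
    apply Filter.mem_of_superset (Ioo_mem_nhds (by linarith) (by linarith) :
      I ∈ nhds t₀)
    intro s hs
    rw [Set.mem_setOf_eq] at ht₀ ⊢
    rw [hconst s hs, ht₀]
  have hne0 : (0:ℝ) ∈ E' := by
    rw [hE', Set.mem_setOf_eq, hg]
    simp only
    rw [hγ0, hx₀]
  have hEuniv : E' = Set.univ := by
    rcases isClopen_iff.mp ⟨hclosed, hopenE⟩ with h | h
    · rw [h] at hne0; exact absurd hne0 (Set.notMem_empty 0)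
    · exact h
  have hH1 : ∀ t : ℝ, H₀ (γ t) = 1 := by
    intro t
    have : t ∈ E' := by rw [hEuniv]; trivial
    exact this
  refine ⟨γ, hγ0, fun t => ?_, hH1⟩
  have := hderiv t
  rwa [hY1 _ (by rw [hH1 t]; norm_num)] at this

end Flow

section Conserve

variable {n : ℕ} {H₀ H : V n → ℝ}

lemma H_const_along (hsm : ContDiffOn ℝ (⊤ : ℕ∞) H {(0 : V n)}ᶜ)
    (hcomm : ∀ x : V n, x ≠ 0 → poisson H H₀ x = 0)
    {γ : ℝ → V n} (hγ' : ∀ t, HasDerivAt γ (XH H₀ (γ t)) t)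
    (hne : ∀ t, γ t ≠ 0) : ∀ t, H (γ t) = H (γ 0) := by
  have hdiff : ∀ t, HasDerivAt (fun s => H (γ s)) 0 t := by
    intro t
    have h := (diffAt hsm (hne t)).hasFDerivAt.comp_hasDerivAt t (hγ' t)
    rwa [fderiv_XH, hcomm _ (hne t)] at h
  exact fun t => is_const_of_deriv_eq_zero
    (fun s => (hdiff s).differentiableAt) (fun s => (hdiff s).deriv) t 0

end Conserve

/-- Proposition 1, inequality part: let `Σ₀ = {H₀ = 1}` be a
starshaped hypersurface whose Reeb flow is periodic with period `sys(Σ₀)`, and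
`Σ = {H = 1}` with `{H, H₀} = 0` and (after rescaling) `vol(Σ) = vol(Σ₀)`.
Then `sys(Σ) ≤ sys(Σ₀)` and `𝔖(Σ) ≥ 𝔖(Σ₀)`. -/
theorem stmt18 (n : ℕ) (hn : 0 < n) (H₀ H : V n → ℝ)
    (hsm₀ : ContDiffOn ℝ (⊤ : ℕ∞) H₀ {(0 : V n)}ᶜ)
    (hpos₀ : ∀ x : V n, x ≠ 0 → 0 < H₀ x)
    (hhom₀ : ∀ l : ℝ, 0 < l → ∀ x, H₀ (l • x) = l ^ 2 * H₀ x)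
    (hsm : ContDiffOn ℝ (⊤ : ℕ∞) H {(0 : V n)}ᶜ)
    (hpos : ∀ x : V n, x ≠ 0 → 0 < H x)
    (hhom : ∀ l : ℝ, 0 < l → ∀ x, H (l • x) = l ^ 2 * H x)
    (hsys₀ : 0 < sys n H₀)
    -- the Reeb flow of `Σ₀` is periodic with period `sys(Σ₀)`:
    (hper : ∀ γ : ℝ → V n,
      (∀ t : ℝ, HasDerivAt γ (XH H₀ (γ t)) t) → H₀ (γ 0) = 1 →
      ∀ t : ℝ, γ (t + sys n H₀) = γ t)
    -- `H` is constant along the orbits of the Hamiltonian flow of `H₀`: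
    (hcomm : ∀ x : V n, x ≠ 0 → poisson H H₀ x = 0)
    -- volume normalization:
    (hvol : vol n H = vol n H₀) :
    sys n H ≤ sys n H₀ ∧ SV n H₀ ≤ SV n H := by
  classical
  obtain ⟨x₀, hx₀1, hx₀ge, hx₀max⟩ :=
    exists_max_ge_one hn hsm₀ hpos₀ hhom₀ hsm hpos hhom hvol
  set m := H x₀ with hm
  have hm1 : 1 ≤ m := hx₀ge
  have hmpos : 0 < m := lt_of_lt_of_le one_pos hm1
  obtain ⟨γ, hγ0, hγ', hγ1⟩ := global_flow hn hsm₀ hpos₀ hhom₀ hx₀1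
  have hγne : ∀ t, γ t ≠ 0 := fun t => level_ne_zero hhom₀ (hγ1 t)
  have hHconst : ∀ t, H (γ t) = m := by
    have h := H_const_along hsm hcomm hγ' hγne
    intro t; rw [h t, hγ0]
  have hXHc : ∀ t, XH H (γ t) = m • XH H₀ (γ t) := by
    intro t
    have hmax' : ∀ y, H₀ y = 1 → H y ≤ H (γ t) := by
      intro y hy; rw [hHconst t]; exact hx₀max y hy
    have := lagrange_XH hsm₀ hpos₀ hhom₀ hsm hhom (hγ1 t) hmax'
    rwa [hHconst t] at this
  set T₀ := sys n H₀ with hT₀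
  set b := (Real.sqrt m)⁻¹ with hb
  have hsm' : (0:ℝ) < Real.sqrt m := Real.sqrt_pos.mpr hmpos
  have hbpos : 0 < b := by positivity
  have hb2 : b ^ 2 = m⁻¹ := by
    rw [hb, inv_pow, Real.sq_sqrt hmpos.le]
  set δ : ℝ → V n := fun t => b • γ (m * t) with hδ
  have hδ1 : ∀ t, H (δ t) = 1 := by
    intro t
    rw [hδ]
    simp only
    rw [hhom b hbpos, hb2, hHconst, inv_mul_cancel₀ hmpos.ne']
  have hδ' : ∀ t, HasDerivAt δ (XH H (δ t)) t := by
    intro t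
    have hinner : HasDerivAt (fun s : ℝ => m * s) m t := by
      simpa using (hasDerivAt_id t).const_mul m
    have houter : HasDerivAt (fun s : ℝ => γ (m * s)) (m • XH H₀ (γ (m * t))) t :=
      (hγ' (m * t)).scomp t hinner
    have hsmul : HasDerivAt δ (b • m • XH H₀ (γ (m * t))) t := houter.const_smul b
    have heq : XH H (δ t) = b • m • XH H₀ (γ (m * t)) := by
      rw [hδ]
      simp only
      rw [XH_homog hsm hhom (hγne (m * t)) hbpos, hXHc (m * t)]
    rwa [← heq] at hsmul
  set T := T₀ / m with hT
  have hTpos : 0 < T := div_pos hsys₀ hmpos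
  have hδper : δ T = δ 0 := by
    have h1 : m * T = T₀ := by
      rw [hT]; field_simp
    have h2 : γ T₀ = γ 0 := by
      have := hper γ hγ' (by rw [hγ0, hx₀1]) 0
      simpa using this
    rw [hδ]
    simp only
    rw [h1, mul_zero, h2]
  have hmem : T ∈ actions n H :=
    ⟨T, δ, hTpos, hδ', hδ1, hδper, (action_eq_period hsm hhom hδ' hδ1).symm⟩
  obtain ⟨τ, hτ, hbd⟩ := period_bound hn hsm hpos hhom
  have hsubIci : ∀ A ∈ actions n H, τ ≤ A := by
    rintro A ⟨T', γ', hT', hγ'', hγ1', hper', hAeq⟩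
    rw [hAeq, action_eq_period hsm hhom hγ'' hγ1']
    exact hbd T' γ' hT' hγ'' hγ1' hper'
  have hbdd : BddBelow (actions n H) := ⟨τ, fun A hA => hsubIci A hA⟩
  have hsysle : sys n H ≤ T := csInf_le hbdd hmem
  have hsysge : τ ≤ sys n H := le_csInf ⟨T, hmem⟩ (fun A hA => hsubIci A hA)
  have hspos : 0 < sys n H := lt_of_lt_of_le hτ hsysge
  have hTle : T ≤ T₀ := by
    rw [hT]
    exact div_le_self hsys₀.le hm1
  have hfirst : sys n H ≤ sys n H₀ := hsysle.trans hTle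
  refine ⟨hfirst, ?_⟩
  unfold SV
  rw [hvol]
  apply div_le_div_of_nonneg_left ENNReal.toReal_nonneg
  · exact pow_pos hspos n
  · exact pow_le_pow_left₀ hspos.le hfirst n
end
end

section
/- If Σ ⊂ ℝ^{2n} is a compact smooth starshaped hypersurface invariant under the flow of H_st (equivalently, Σ bounds a circular domain K with e^{iθ}K = K for all θ), then 𝔖(Σ) ≥ 1/n!, with equality iff Σ is a round sphere centered at the origin. -/
open Real MeasureTheory intervalIntegral

noncomputable section

def Hst (n : ℕ) (x : V n) : ℝ := ∑ i, ((x.1 i) ^ 2 + (x.2 i) ^ 2)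

namespace S19
variable {n : ℕ}

def ip (x y : V n) : ℝ := ∑ i, (x.1 i * y.1 i + x.2 i * y.2 i)

lemma Hst_eq_ip (x : V n) : Hst n x = ip x x := by
  unfold Hst ip; apply Finset.sum_congr rfl; intros; ring

lemma Hst_nonneg (x : V n) : 0 ≤ Hst n x :=
  Finset.sum_nonneg fun i _ => by positivity

lemma Hst_zero : Hst n 0 = 0 := by simp [Hst]

lemma Hst_pos {x : V n} (hx : x ≠ 0) : 0 < Hst n x := by
  rcases (Hst_nonneg x).lt_or_eq with h | h
  · exact h
  · exfalso; apply hx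
    have h0 : ∀ i ∈ Finset.univ, ((x.1 i)^2 + (x.2 i)^2 : ℝ) = 0 := by
      intro i _
      have := (Finset.sum_eq_zero_iff_of_nonneg (fun i _ => by positivity)).1 h.symm
      exact this i (Finset.mem_univ i)
    have hx1 : ∀ i, x.1 i = 0 ∧ x.2 i = 0 := by
      intro i; have := h0 i (Finset.mem_univ i)
      constructor <;> nlinarith [sq_nonneg (x.1 i), sq_nonneg (x.2 i)]
    ext i
    · simpa using (hx1 i).1
    · simpa using (hx1 i).2

lemma Hst_smul (l : ℝ) (x : V n) : Hst n (l • x) = l ^ 2 * Hst n x := by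
  unfold Hst
  rw [Finset.mul_sum]
  apply Finset.sum_congr rfl; intro i _
  simp [Prod.smul_fst, Prod.smul_snd]; ring

def rot (θ : ℝ) (x : V n) : V n :=
  (Real.cos θ • x.1 + Real.sin θ • x.2, Real.cos θ • x.2 - Real.sin θ • x.1)

lemma Hst_rot (θ : ℝ) (x : V n) : Hst n (rot θ x) = Hst n x := by
  unfold Hst rot
  apply Finset.sum_congr rfl; intro i _
  simp only [Pi.add_apply, Pi.sub_apply, Pi.smul_apply, smul_eq_mul]
  linear_combination ((x.1 i)^2 + (x.2 i)^2) * (Real.sin_sq_add_cos_sq θ)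

lemma continuous_Hst : Continuous (Hst n) := by
  unfold Hst; fun_prop

def eq (i : Fin n) : V n →L[ℝ] ℝ :=
  (ContinuousLinearMap.proj i).comp (ContinuousLinearMap.fst ℝ (Fin n → ℝ) (Fin n → ℝ))
def ep (i : Fin n) : V n →L[ℝ] ℝ :=
  (ContinuousLinearMap.proj i).comp (ContinuousLinearMap.snd ℝ (Fin n → ℝ) (Fin n → ℝ))

@[simp] lemma eq_apply (i : Fin n) (v : V n) : eq i v = v.1 i := rfl
@[simp] lemma ep_apply (i : Fin n) (v : V n) : ep i v = v.2 i := rfl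

def ipCLM (x : V n) : V n →L[ℝ] ℝ := ∑ i, (x.1 i • eq i + x.2 i • ep i)

lemma ipCLM_apply (x v : V n) : ipCLM x v = ip x v := by
  unfold ipCLM ip
  rw [ContinuousLinearMap.sum_apply]
  apply Finset.sum_congr rfl; intro i _; simp

lemma hasFDerivAt_Hst (x : V n) : HasFDerivAt (Hst n) ((2:ℝ) • ipCLM x) x := by
  have h : ∀ i : Fin n, HasFDerivAt (fun y : V n => (y.1 i)^2 + (y.2 i)^2)
      ((2 * x.1 i) • eq i + (2 * x.2 i) • ep i) x := by
    intro i
    have h1 : HasFDerivAt (fun y : V n => y.1 i) (eq i) x := (eq i).hasFDerivAt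
    have h2 : HasFDerivAt (fun y : V n => y.2 i) (ep i) x := (ep i).hasFDerivAt
    have h1' : HasFDerivAt (fun y : V n => (y.1 i)^2) ((2 * x.1 i) • eq i) x := by
      have hm := h1.mul h1
      have hf : (fun y : V n => (y.1 i)^2) = fun y => y.1 i * y.1 i := by funext y; ring
      rw [hf, two_mul, add_smul]
      exact hm
    have h2' : HasFDerivAt (fun y : V n => (y.2 i)^2) ((2 * x.2 i) • ep i) x := by
      have hm := h2.mul h2
      have hf : (fun y : V n => (y.2 i)^2) = fun y => y.2 i * y.2 i := by funext y; ring
      rw [hf, two_mul, add_smul]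
      exact hm
    exact h1'.add h2'
  have hsum : (∑ i, ((2 * x.1 i) • eq i + (2 * x.2 i) • ep i)) = (2:ℝ) • ipCLM (n := n) x := by
    apply ContinuousLinearMap.ext; intro v
    simp only [ContinuousLinearMap.sum_apply, ContinuousLinearMap.add_apply,
      ContinuousLinearMap.smul_apply, eq_apply, ep_apply, smul_eq_mul, ipCLM_apply]
    unfold ip; rw [Finset.mul_sum]
    apply Finset.sum_congr rfl; intros; ring
  have := HasFDerivAt.fun_sum (fun i (_ : i ∈ Finset.univ) => h i)
  rw [hsum] at this
  exact this

lemma fderiv_Hst (x v : V n) : fderiv ℝ (Hst n) x v = 2 * ip x v := by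
  rw [(hasFDerivAt_Hst x).fderiv]
  simp [ipCLM_apply]

lemma clm_expand (L : V n →L[ℝ] ℝ) (z : V n) :
    L z = ∑ i, (z.1 i * L ((Pi.single i 1 : Fin n → ℝ), 0)
      + z.2 i * L ((0 : Fin n → ℝ), Pi.single i 1)) := by
  have hz : z = ∑ i, (z.1 i • ((Pi.single i 1 : Fin n → ℝ), (0 : Fin n → ℝ))
      + z.2 i • ((0 : Fin n → ℝ), (Pi.single i 1 : Fin n → ℝ))) := by
    apply Prod.ext
    · rw [Prod.fst_sum]; funext j
      rw [Finset.sum_apply]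
      simp [Pi.single_apply]
    · rw [Prod.snd_sum]; funext j
      rw [Finset.sum_apply]
      simp [Pi.single_apply]
  conv_lhs => rw [hz]
  rw [map_sum]
  apply Finset.sum_congr rfl; intro i _
  rw [map_add, ContinuousLinearMap.map_smul, ContinuousLinearMap.map_smul]
  simp [smul_eq_mul]

lemma ip_single_fst (x : V n) (i : Fin n) : ip x ((Pi.single i 1 : Fin n → ℝ), 0) = x.1 i := by
  unfold ip; simp [Pi.single_apply]
lemma ip_single_snd (x : V n) (i : Fin n) : ip x ((0 : Fin n → ℝ), Pi.single i 1) = x.2 i := by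
  unfold ip; simp [Pi.single_apply]

lemma diffAt (H : V n → ℝ) (hsm : ContDiffOn ℝ (⊤ : ℕ∞) H {(0 : V n)}ᶜ) {x : V n} (hx : x ≠ 0) :
    DifferentiableAt ℝ H x :=
  ((hsm.contDiffAt (isOpen_compl_singleton.mem_nhds (by simpa using hx))).differentiableAt (by simp))

lemma H_zero (H : V n → ℝ) (hhom : ∀ l : ℝ, 0 < l → ∀ x, H (l • x) = l ^ 2 * H x) :
    H 0 = 0 := by
  have := hhom 2 (by norm_num) 0
  rw [smul_zero] at this; nlinarith

lemma euler (H : V n → ℝ) (hsm : ContDiffOn ℝ (⊤ : ℕ∞) H {(0 : V n)}ᶜ)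
    (hhom : ∀ l : ℝ, 0 < l → ∀ x, H (l • x) = l ^ 2 * H x)
    {x : V n} (hx : x ≠ 0) : fderiv ℝ H x x = 2 * H x := by
  have hd : HasFDerivAt H (fderiv ℝ H x) x := (diffAt H hsm hx).hasFDerivAt
  have hψ : HasDerivAt (fun l : ℝ => l • x) ((1:ℝ) • x) 1 := (hasDerivAt_id 1).smul_const x
  have hc : HasDerivAt (fun l : ℝ => H (l • x)) (fderiv ℝ H x x) 1 := by
    have hd' : HasFDerivAt H (fderiv ℝ H x) ((1:ℝ) • x) := by simpa using hd
    have := hd'.comp_hasDerivAt (x := (1:ℝ)) hψ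
    simp only [one_smul] at this; exact this
  have hev : (fun l : ℝ => l ^ 2 * H x) =ᶠ[nhds (1:ℝ)] (fun l : ℝ => H (l • x)) := by
    filter_upwards [eventually_gt_nhds (by norm_num : (0:ℝ) < 1)] with l hl
    rw [hhom l hl]
  have hc2 : HasDerivAt (fun l : ℝ => l ^ 2 * H x) (fderiv ℝ H x x) 1 :=
    hc.congr_of_eventuallyEq hev
  have hc3 : HasDerivAt (fun l : ℝ => l ^ 2 * H x) (2 * H x) 1 := by
    have := (hasDerivAt_pow 2 (1:ℝ)).mul_const (H x)
    simpa using this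
  exact hc2.unique hc3

lemma alphaF_XH (H : V n → ℝ) (hsm : ContDiffOn ℝ (⊤ : ℕ∞) H {(0 : V n)}ᶜ)
    (hhom : ∀ l : ℝ, 0 < l → ∀ x, H (l • x) = l ^ 2 * H x)
    {z : V n} (hz : z ≠ 0) : alphaF z (XH H z) = H z := by
  have he : fderiv ℝ H z z = ∑ i, (z.1 i * pdq H z i + z.2 i * pdp H z i) :=
    clm_expand (fderiv ℝ H z) z
  have : alphaF z (XH H z) = (1/2) * ∑ i, (z.1 i * pdq H z i + z.2 i * pdp H z i) := by
    unfold alphaF XH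
    congr 1
    apply Finset.sum_congr rfl; intros; ring
  rw [this, ← he, euler H hsm hhom hz]; ring

lemma action_eq_period (H : V n → ℝ) (hsm : ContDiffOn ℝ (⊤ : ℕ∞) H {(0 : V n)}ᶜ)
    (hhom : ∀ l : ℝ, 0 < l → ∀ x, H (l • x) = l ^ 2 * H x)
    {T : ℝ} {γ : ℝ → V n}
    (hγ : ∀ t : ℝ, HasDerivAt γ (XH H (γ t)) t) (hH1 : ∀ t : ℝ, H (γ t) = 1) :
    (∫ t in (0:ℝ)..T, alphaF (γ t) (deriv γ t)) = T := by
  have hne : ∀ t, γ t ≠ 0 := by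
    intro t h
    have := hH1 t
    rw [h, H_zero H hhom] at this
    norm_num at this
  have : (fun t => alphaF (γ t) (deriv γ t)) = fun _ => (1:ℝ) := by
    funext t
    rw [(hγ t).deriv, alphaF_XH H hsm hhom (hne t), hH1 t]
  rw [this, intervalIntegral.integral_const]
  simp


lemma volume_Hst_le (hn : 0 < n) {R : ℝ} (hR : 0 ≤ R) :
    volume {x : V n | Hst n x ≤ R ^ 2} =
      (ENNReal.ofReal R) ^ (n + n) * ENNReal.ofReal (π ^ n / n.factorial) := by
  haveI : Nonempty (Fin n ⊕ Fin n) := ⟨Sum.inl ⟨0, hn⟩⟩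
  set e1 := (MeasurableEquiv.toLp 2 (Fin n ⊕ Fin n → ℝ)).symm
  set e2 := MeasurableEquiv.sumPiEquivProdPi (fun _ : Fin n ⊕ Fin n => ℝ)
  have hmp : MeasurePreserving (fun y : EuclideanSpace ℝ (Fin n ⊕ Fin n) => e2 (e1 y))
      volume volume :=
    (volume_measurePreserving_sumPiEquivProdPi _).comp
      (EuclideanSpace.volume_preserving_symm_measurableEquiv_toLp _)
  have hS : NullMeasurableSet {x : V n | Hst n x ≤ R ^ 2} volume := by
    have : IsClosed {x : V n | Hst n x ≤ R ^ 2} :=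
      isClosed_le continuous_Hst continuous_const
    exact this.measurableSet.nullMeasurableSet
  have hpre : (fun y : EuclideanSpace ℝ (Fin n ⊕ Fin n) => e2 (e1 y)) ⁻¹'
      {x : V n | Hst n x ≤ R ^ 2} = Metric.closedBall 0 R := by
    ext y
    have hnorm : Hst n (e2 (e1 y)) = ‖y‖ ^ 2 := by
      have h1 : Hst n (e2 (e1 y)) = ∑ j : Fin n ⊕ Fin n, (y j) ^ 2 := by
        rw [Fintype.sum_sum_type]
        unfold Hst
        rw [← Finset.sum_add_distrib]
        rfl
      rw [h1, EuclideanSpace.norm_eq, Real.sq_sqrt]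
      · apply Finset.sum_congr rfl; intros; rw [Real.norm_eq_abs, sq_abs]
      · exact Finset.sum_nonneg fun i _ => by positivity
    simp only [Set.mem_preimage, Set.mem_setOf_eq, Metric.mem_closedBall,
      dist_zero_right, hnorm]
    constructor
    · intro h; nlinarith [norm_nonneg y]
    · intro h; nlinarith [norm_nonneg y]
  rw [← hmp.measure_preimage hS, hpre, EuclideanSpace.volume_closedBall]
  have hcard : Fintype.card (Fin n ⊕ Fin n) = n + n := by simp
  rw [hcard]
  congr 1
  rw [ENNReal.ofReal_eq_ofReal_iff]
  · rw [show ((n + n : ℕ) : ℝ) / 2 + 1 = (n : ℝ) + 1 by push_cast; ring]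
    rw [Real.Gamma_nat_eq_factorial]
    congr 1
    rw [show n + n = 2 * n by ring, pow_mul, Real.sq_sqrt pi_nonneg]
  · positivity
  · positivity


@[simp] lemma rot_fst (θ : ℝ) (x : V n) (i : Fin n) :
    (rot θ x).1 i = Real.cos θ * x.1 i + Real.sin θ * x.2 i := rfl
@[simp] lemma rot_snd (θ : ℝ) (x : V n) (i : Fin n) :
    (rot θ x).2 i = Real.cos θ * x.2 i - Real.sin θ * x.1 i := rfl

lemma comp_q {γ : ℝ → V n} {v : V n} {t : ℝ} (hd : HasDerivAt γ v t) (i : Fin n) :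
    HasDerivAt (fun s => (γ s).1 i) (v.1 i) t :=
  (eq i).hasFDerivAt.comp_hasDerivAt t hd
lemma comp_p {γ : ℝ → V n} {v : V n} {t : ℝ} (hd : HasDerivAt γ v t) (i : Fin n) :
    HasDerivAt (fun s => (γ s).2 i) (v.2 i) t :=
  (ep i).hasFDerivAt.comp_hasDerivAt t hd

lemma hasDerivAt_cos_lin (ω t : ℝ) :
    HasDerivAt (fun s : ℝ => Real.cos (ω * s)) (-(Real.sin (ω * t)) * ω) t :=
  (Real.hasDerivAt_cos (ω * t)).comp t (by simpa using (hasDerivAt_id t).const_mul ω)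
lemma hasDerivAt_sin_lin (ω t : ℝ) :
    HasDerivAt (fun s : ℝ => Real.sin (ω * s)) (Real.cos (ω * t) * ω) t :=
  (Real.hasDerivAt_sin (ω * t)).comp t (by simpa using (hasDerivAt_id t).const_mul ω)

lemma circle_mem_actions (H : V n → ℝ) (hsm : ContDiffOn ℝ (⊤ : ℕ∞) H {(0 : V n)}ᶜ)
    (hhom : ∀ l : ℝ, 0 < l → ∀ x, H (l • x) = l ^ 2 * H x)
    {c : ℝ} (hc : 0 < c) {z₀ : V n}
    (hH1 : ∀ θ : ℝ, H (rot θ z₀) = 1)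
    (hgq : ∀ θ : ℝ, ∀ i, pdq H (rot θ z₀) i = (2/c) * (rot θ z₀).1 i)
    (hgp : ∀ θ : ℝ, ∀ i, pdp H (rot θ z₀) i = (2/c) * (rot θ z₀).2 i) :
    (π * c) ∈ actions n H := by
  set ω : ℝ := 2 / c with hωdef
  have hω : 0 < ω := by positivity
  set γ : ℝ → V n := fun t => rot (ω * t) z₀ with hγdef
  have hH1' : ∀ t, H (γ t) = 1 := fun t => hH1 (ω * t)
  have hd : ∀ t, HasDerivAt γ (XH H (γ t)) t := by
    intro t
    have hXH : XH H (γ t) = ((fun i => ω * (γ t).2 i, fun i => -(ω * (γ t).1 i)) : V n) := by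
      unfold XH
      refine Prod.ext ?_ ?_ <;> funext i
      · simp only [hγdef, hgp (ω * t) i]
      · simp only [hγdef, hgq (ω * t) i]
    rw [hXH]
    apply HasDerivAt.prodMk
    · apply hasDerivAt_pi.2; intro i
      have h1 := ((hasDerivAt_cos_lin ω t).mul_const (z₀.1 i)).add
        ((hasDerivAt_sin_lin ω t).mul_const (z₀.2 i))
      have : HasDerivAt (fun s => (γ s).1 i)
          (-Real.sin (ω * t) * ω * z₀.1 i + Real.cos (ω * t) * ω * z₀.2 i) t := h1
      refine this.congr_deriv ?_
      simp only [hγdef, rot_snd]; ring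
    · apply hasDerivAt_pi.2; intro i
      have h1 := ((hasDerivAt_cos_lin ω t).mul_const (z₀.2 i)).sub
        ((hasDerivAt_sin_lin ω t).mul_const (z₀.1 i))
      have : HasDerivAt (fun s => (γ s).2 i)
          (-Real.sin (ω * t) * ω * z₀.2 i - Real.cos (ω * t) * ω * z₀.1 i) t := h1
      refine this.congr_deriv ?_
      simp only [hγdef, rot_fst]; ring
  have hperiod : γ (π * c) = γ 0 := by
    have hωT : ω * (π * c) = 2 * π := by
      field_simp [hωdef]
      rw [hωdef]; field_simp
    refine Prod.ext ?_ ?_ <;> funext i <;>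
      simp [hγdef, hωT, Real.cos_two_pi, Real.sin_two_pi]
  exact ⟨π * c, γ, by positivity, hd, hH1', hperiod,
    (action_eq_period H hsm hhom hd hH1').symm⟩

lemma rotation_rigidity {ω T : ℝ} (hω : 0 < ω) (hT : 0 < T) {γ : ℝ → V n}
    (hd : ∀ t, HasDerivAt γ ((fun i => ω * (γ t).2 i, fun i => -(ω * (γ t).1 i)) : V n) t)
    (h0 : γ 0 ≠ 0) (hTT : γ T = γ 0) : 2 * π ≤ ω * T := by
  have key : ∀ i : Fin n,
      Real.cos (ω * T) * (γ 0).1 i - Real.sin (ω * T) * (γ 0).2 i = (γ 0).1 i ∧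
      Real.cos (ω * T) * (γ 0).2 i + Real.sin (ω * T) * (γ 0).1 i = (γ 0).2 i := by
    intro i
    set a : ℝ → ℝ := fun t => Real.cos (ω * t) * (γ t).1 i - Real.sin (ω * t) * (γ t).2 i
      with hadef
    set b : ℝ → ℝ := fun t => Real.cos (ω * t) * (γ t).2 i + Real.sin (ω * t) * (γ t).1 i
      with hbdef
    have hq : ∀ t, HasDerivAt (fun s => (γ s).1 i) (ω * (γ t).2 i) t := fun t => comp_q (hd t) i
    have hp : ∀ t, HasDerivAt (fun s => (γ s).2 i) (-(ω * (γ t).1 i)) t := fun t => comp_p (hd t) i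
    have hda : ∀ t, HasDerivAt a 0 t := by
      intro t
      have h1 := ((hasDerivAt_cos_lin ω t).mul (hq t)).sub ((hasDerivAt_sin_lin ω t).mul (hp t))
      refine h1.congr_deriv ?_
      ring
    have hdb : ∀ t, HasDerivAt b 0 t := by
      intro t
      have h1 := ((hasDerivAt_cos_lin ω t).mul (hp t)).add ((hasDerivAt_sin_lin ω t).mul (hq t))
      refine h1.congr_deriv ?_
      ring
    have hca : a T = a 0 := by
      apply is_const_of_deriv_eq_zero (fun t => (hda t).differentiableAt)
      intro t; exact (hda t).deriv
    have hcb : b T = b 0 := by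
      apply is_const_of_deriv_eq_zero (fun t => (hdb t).differentiableAt)
      intro t; exact (hdb t).deriv
    rw [hadef] at hca
    rw [hbdef] at hcb
    simp only [hTT, mul_zero, Real.cos_zero, Real.sin_zero, one_mul, zero_mul, sub_zero,
      add_zero] at hca hcb
    exact ⟨hca, hcb⟩
  obtain ⟨i, hi⟩ : ∃ i : Fin n, (γ 0).1 i ≠ 0 ∨ (γ 0).2 i ≠ 0 := by
    by_contra hcon
    push_neg at hcon
    apply h0
    ext i
    · exact (hcon i).1
    · exact (hcon i).2
  have h2 : (γ 0).1 i ^ 2 + (γ 0).2 i ^ 2 > 0 := by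
    rcases hi with h | h
    · positivity
    · positivity
  obtain ⟨h1, h2'⟩ := key i
  have hcos : Real.cos (ω * T) = 1 := by
    nlinarith [Real.sin_sq_add_cos_sq (ω * T)]
  obtain ⟨k, hk⟩ := (Real.cos_eq_one_iff (ω * T)).1 hcos
  have hωT : 0 < ω * T := by positivity
  have hk1 : (1 : ℝ) ≤ (k : ℝ) := by
    by_contra hlt
    push_neg at hlt
    have : (k : ℝ) ≤ 0 := by
      have : k < 1 := by exact_mod_cast hlt
      have : k ≤ 0 := by omega
      exact_mod_cast this
    nlinarith [Real.pi_pos]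
  nlinarith [Real.pi_pos]


lemma grad_eq (H : V n → ℝ) (hsm : ContDiffOn ℝ (⊤ : ℕ∞) H {(0 : V n)}ᶜ)
    {c : ℝ} (hc : 0 < c) {z : V n} (hz : z ≠ 0)
    (hle : ∀ x, H x ≤ Hst n x / c) (heq : H z = Hst n z / c) :
    (∀ i, pdq H z i = (2/c) * z.1 i) ∧ (∀ i, pdp H z i = (2/c) * z.2 i) := by
  set G : V n → ℝ := fun x => Hst n x / c - H x with hGdef
  have hHst : ∀ x : V n, HasFDerivAt (fun y => Hst n y / c) ((1/c) • ((2:ℝ) • ipCLM x)) x := by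
    intro x
    have h1 := (hasFDerivAt_Hst x).const_mul (1/c)
    have hf : (fun y => Hst n y / c) = fun y => (1/c) * Hst n y := by funext y; ring
    rw [hf]
    exact h1
  have hdH : HasFDerivAt H (fderiv ℝ H z) z := (diffAt H hsm hz).hasFDerivAt
  have hdG : HasFDerivAt G ((1/c) • ((2:ℝ) • ipCLM z) - fderiv ℝ H z) z := (hHst z).sub hdH
  have hmin : IsLocalMin G z := by
    apply Filter.Eventually.of_forall
    intro x
    show G z ≤ G x
    simp only [hGdef]
    have := hle x
    linarith [heq]
  have h0 : fderiv ℝ G z = 0 := hmin.fderiv_eq_zero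
  rw [hdG.fderiv] at h0
  have hfd : fderiv ℝ H z = (1/c) • ((2:ℝ) • ipCLM z) := by
    exact (sub_eq_zero.1 h0).symm
  constructor
  · intro i
    unfold pdq
    rw [hfd]
    simp [ipCLM_apply, ip_single_fst]
    ring
  · intro i
    unfold pdp
    rw [hfd]
    simp [ipCLM_apply, ip_single_snd]
    ring


def aCLM (x : V n) : V n →L[ℝ] ℝ :=
  (1/2 : ℝ) • ∑ i, (x.2 i • eq i - x.1 i • ep i)

lemma aCLM_apply (x v : V n) : aCLM x v = alphaF x v := by
  unfold aCLM alphaF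
  simp only [ContinuousLinearMap.smul_apply, ContinuousLinearMap.sum_apply,
    ContinuousLinearMap.sub_apply, ContinuousLinearMap.smul_apply, eq_apply, ep_apply,
    smul_eq_mul]

lemma alphaF_sub_left (x y v : V n) : alphaF (x - y) v = alphaF x v - alphaF y v := by
  unfold alphaF
  rw [← mul_sub, ← Finset.sum_sub_distrib]
  congr 1
  apply Finset.sum_congr rfl; intro i _
  have h1 : (x - y).1 i = x.1 i - y.1 i := rfl
  have h2 : (x - y).2 i = x.2 i - y.2 i := rfl
  rw [h1, h2]; ring

lemma alphaF_bound (x v : V n) : |alphaF x v| ≤ n * ‖x‖ * ‖v‖ := by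
  unfold alphaF
  rw [abs_mul]
  have h1 : |(1/2 : ℝ)| = 1/2 := by norm_num
  rw [h1]
  have h2 : |∑ i, (x.2 i * v.1 i - x.1 i * v.2 i)| ≤ ∑ i : Fin n, 2 * (‖x‖ * ‖v‖) := by
    refine (Finset.abs_sum_le_sum_abs _ _).trans ?_
    apply Finset.sum_le_sum
    intro i _
    have hx1 : |x.1 i| ≤ ‖x‖ := by
      calc |x.1 i| = ‖x.1 i‖ := rfl
        _ ≤ ‖x.1‖ := norm_le_pi_norm x.1 i
        _ ≤ ‖x‖ := norm_fst_le x
    have hx2 : |x.2 i| ≤ ‖x‖ := by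
      calc |x.2 i| = ‖x.2 i‖ := rfl
        _ ≤ ‖x.2‖ := norm_le_pi_norm x.2 i
        _ ≤ ‖x‖ := norm_snd_le x
    have hv1 : |v.1 i| ≤ ‖v‖ := by
      calc |v.1 i| = ‖v.1 i‖ := rfl
        _ ≤ ‖v.1‖ := norm_le_pi_norm v.1 i
        _ ≤ ‖v‖ := norm_fst_le v
    have hv2 : |v.2 i| ≤ ‖v‖ := by
      calc |v.2 i| = ‖v.2 i‖ := rfl
        _ ≤ ‖v.2‖ := norm_le_pi_norm v.2 i
        _ ≤ ‖v‖ := norm_snd_le v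
    calc |x.2 i * v.1 i - x.1 i * v.2 i| ≤ |x.2 i * v.1 i| + |x.1 i * v.2 i| := abs_sub _ _
      _ = |x.2 i| * |v.1 i| + |x.1 i| * |v.2 i| := by rw [abs_mul, abs_mul]
      _ ≤ ‖x‖ * ‖v‖ + ‖x‖ * ‖v‖ := by
          apply add_le_add <;> apply mul_le_mul <;>
            first | assumption | positivity | exact abs_nonneg _ |
              exact (abs_nonneg _).trans (by assumption)
      _ = 2 * (‖x‖ * ‖v‖) := by ring
  calc (1/2 : ℝ) * |∑ i, (x.2 i * v.1 i - x.1 i * v.2 i)| ≤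
      (1/2) * ∑ i : Fin n, 2 * (‖x‖ * ‖v‖) := by
        apply mul_le_mul_of_nonneg_left h2; norm_num
    _ = n * ‖x‖ * ‖v‖ := by
        rw [Finset.sum_const, Finset.card_univ, Fintype.card_fin]
        simp [nsmul_eq_mul]; ring


lemma continuous_alphaF_comp {u w : ℝ → V n} (hu : Continuous u) (hw : Continuous w) :
    Continuous fun t => alphaF (u t) (w t) := by
  unfold alphaF
  apply Continuous.mul continuous_const
  apply continuous_finset_sum
  intro i _
  exact (((continuous_apply i).comp (continuous_snd.comp hu)).mul
    ((continuous_apply i).comp (continuous_fst.comp hw))).sub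
    (((continuous_apply i).comp (continuous_fst.comp hu)).mul
    ((continuous_apply i).comp (continuous_snd.comp hw)))

lemma actions_lower_bound (H : V n → ℝ) (hsm : ContDiffOn ℝ (⊤ : ℕ∞) H {(0 : V n)}ᶜ)
    (hhom : ∀ l : ℝ, 0 < l → ∀ x, H (l • x) = l ^ 2 * H x)
    {K : ℝ} (hK : 0 < K)
    (hbd : ∀ z : V n, H z = 1 → ‖XH H z‖ ≤ K)
    (hXc : ContinuousOn (XH H) {(0 : V n)}ᶜ) :
    ∀ A ∈ actions n H, 2 / ((n+1) * K^2) ≤ A := by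
  rintro A ⟨T, γ, hT, hγ, hH1, hTT, hA⟩
  have hne : ∀ t, γ t ≠ 0 := by
    intro t h
    have := hH1 t
    rw [h, H_zero H hhom] at this
    norm_num at this
  have hAT : A = T := by rw [hA, action_eq_period H hsm hhom hγ hH1]
  rw [hAT]
  have hγc : Continuous γ := by
    apply continuous_iff_continuousAt.2
    intro t
    exact (hγ t).continuousAt
  have hXγ : Continuous (fun t => XH H (γ t)) := by
    apply hXc.comp_continuous hγc
    intro t; simpa using hne t
  have hbd' : ∀ t, ‖XH H (γ t)‖ ≤ K := fun t => hbd (γ t) (hH1 t)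
  have hmean : ∀ t ∈ Set.Icc (0:ℝ) T, ‖γ t - γ 0‖ ≤ K * t := by
    intro t ht
    have := convex_univ.norm_image_sub_le_of_norm_hasDerivWithin_le
      (f := γ) (f' := fun s => XH H (γ s)) (C := K)
      (fun s _ => (hγ s).hasDerivWithinAt) (fun s _ => hbd' s)
      (Set.mem_univ 0) (Set.mem_univ t)
    calc ‖γ t - γ 0‖ ≤ K * ‖t - 0‖ := this
      _ = K * |t| := by rw [sub_zero]; rfl
      _ = K * t := by rw [abs_of_nonneg ht.1]
  set f1 : ℝ → ℝ := fun t => alphaF (γ t - γ 0) (XH H (γ t)) with hf1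
  set f2 : ℝ → ℝ := fun t => alphaF (γ 0) (XH H (γ t)) with hf2
  have hf1c : Continuous f1 := continuous_alphaF_comp (hγc.sub continuous_const) hXγ
  have hf2c : Continuous f2 := continuous_alphaF_comp continuous_const hXγ
  have hAint : T = (∫ t in (0:ℝ)..T, f1 t) + ∫ t in (0:ℝ)..T, f2 t := by
    have h1 : T = ∫ t in (0:ℝ)..T, alphaF (γ t) (deriv γ t) :=
      (action_eq_period H hsm hhom hγ hH1).symm
    have h2 : (fun t => alphaF (γ t) (deriv γ t)) = fun t => f1 t + f2 t := by
      funext t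
      rw [(hγ t).deriv, hf1, hf2]
      simp only
      rw [alphaF_sub_left]
      ring
    have h3 : (∫ t in (0:ℝ)..T, alphaF (γ t) (deriv γ t))
        = (∫ t in (0:ℝ)..T, f1 t) + ∫ t in (0:ℝ)..T, f2 t := by
      rw [h2, intervalIntegral.integral_add (hf1c.intervalIntegrable 0 T)
        (hf2c.intervalIntegrable 0 T)]
    rw [← h3, ← h1]
  have hf2zero : (∫ t in (0:ℝ)..T, f2 t) = 0 := by
    have hfe : f2 = fun t => aCLM (γ 0) (XH H (γ t)) := by
      funext t; rw [hf2]; exact (aCLM_apply _ _).symm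
    have hg : ∀ t : ℝ, HasDerivAt (fun s => aCLM (γ 0) (γ s)) (aCLM (γ 0) (XH H (γ t))) t :=
      fun t => (aCLM (γ 0)).hasFDerivAt.comp_hasDerivAt t (hγ t)
    have hi : IntervalIntegrable (fun t => aCLM (γ 0) (XH H (γ t))) volume 0 T := by
      rw [← hfe]; exact hf2c.intervalIntegrable 0 T
    have hftc := intervalIntegral.integral_eq_sub_of_hasDerivAt
      (f := fun s => aCLM (γ 0) (γ s)) (fun t _ => hg t) hi
    rw [hfe, hftc]
    show aCLM (γ 0) (γ T) - aCLM (γ 0) (γ 0) = 0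
    rw [hTT, sub_self]
  have hbound : (∫ t in (0:ℝ)..T, f1 t) ≤ ∫ t in (0:ℝ)..T, ((n+1) * K^2) * t := by
    apply intervalIntegral.integral_mono_on hT.le (hf1c.intervalIntegrable 0 T)
      ((by fun_prop : Continuous fun t : ℝ => (((n:ℝ)+1) * K^2) * t).intervalIntegrable 0 T)
    intro t ht
    have h1 : f1 t ≤ |f1 t| := le_abs_self _
    have h2 : |f1 t| ≤ n * ‖γ t - γ 0‖ * ‖XH H (γ t)‖ := alphaF_bound _ _
    have h3 : ‖γ t - γ 0‖ ≤ K * t := hmean t ht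
    have h4 : ‖XH H (γ t)‖ ≤ K := hbd' t
    have hn0 : (0:ℝ) ≤ n := Nat.cast_nonneg n
    have ht0 : (0:ℝ) ≤ t := ht.1
    have hx0 : (0:ℝ) ≤ ‖γ t - γ 0‖ := norm_nonneg _
    have hv0 : (0:ℝ) ≤ ‖XH H (γ t)‖ := norm_nonneg _
    have h5 : (n:ℝ) * ‖γ t - γ 0‖ * ‖XH H (γ t)‖ ≤ (n:ℝ) * (K * t) * K := by
      apply mul_le_mul ?_ h4 hv0 (by positivity)
      exact mul_le_mul le_rfl h3 hx0 hn0
    have h6 : (n : ℝ) * (K * t) * K ≤ ((n:ℝ)+1) * K^2 * t := by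
      nlinarith [mul_nonneg (sq_nonneg K) ht0]
    linarith
  have hint : (∫ t in (0:ℝ)..T, ((n+1) * K^2) * t) = (n+1) * K^2 * (T^2/2) := by
    rw [intervalIntegral.integral_const_mul, integral_id]
    ring
  have hfinal : T ≤ (n+1) * K^2 * (T^2/2) := by
    calc T = (∫ t in (0:ℝ)..T, f1 t) + ∫ t in (0:ℝ)..T, f2 t := hAint
      _ = ∫ t in (0:ℝ)..T, f1 t := by rw [hf2zero, add_zero]
      _ ≤ ∫ t in (0:ℝ)..T, ((n+1) * K^2) * t := hbound
      _ = (n+1) * K^2 * (T^2/2) := hint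
  have hB : (0:ℝ) < (n+1) * K^2 := by positivity
  rw [div_le_iff₀ hB]
  nlinarith


lemma XH_contOn (H : V n → ℝ) (hsm : ContDiffOn ℝ (⊤ : ℕ∞) H {(0 : V n)}ᶜ) :
    ContinuousOn (XH H) {(0 : V n)}ᶜ := by
  have hfd : ContinuousOn (fderiv ℝ H) {(0 : V n)}ᶜ := by
    apply ContDiffOn.continuousOn_fderiv_of_isOpen hsm isOpen_compl_singleton
    exact (by simp)
  unfold XH
  apply ContinuousOn.prodMk
  · apply continuousOn_pi.2; intro i
    exact (ContinuousLinearMap.apply ℝ ℝ ((0 : Fin n → ℝ), Pi.single i 1)).continuous.comp_continuousOn hfd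
  · apply continuousOn_pi.2; intro i
    exact ((ContinuousLinearMap.apply ℝ ℝ ((Pi.single i 1 : Fin n → ℝ), 0)).continuous.comp_continuousOn hfd).neg

lemma norm_le_of_Hst {x : V n} {R : ℝ} (hR : 0 ≤ R) (h : Hst n x ≤ R ^ 2) : ‖x‖ ≤ R := by
  have hterm : ∀ i : Fin n, (x.1 i)^2 + (x.2 i)^2 ≤ R^2 := by
    intro i
    calc (x.1 i)^2 + (x.2 i)^2 ≤ Hst n x := by
          apply Finset.single_le_sum (f := fun j => (x.1 j)^2 + (x.2 j)^2)
            (fun j _ => by positivity) (Finset.mem_univ i)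
      _ ≤ R^2 := h
  have h1 : ‖x.1‖ ≤ R := by
    apply pi_norm_le_iff_of_nonneg hR |>.2
    intro i
    have := hterm i
    rw [Real.norm_eq_abs]
    nlinarith [sq_abs (x.1 i), abs_nonneg (x.1 i), sq_nonneg (x.2 i)]
  have h2 : ‖x.2‖ ≤ R := by
    apply pi_norm_le_iff_of_nonneg hR |>.2
    intro i
    have := hterm i
    rw [Real.norm_eq_abs]
    nlinarith [sq_abs (x.2 i), abs_nonneg (x.2 i), sq_nonneg (x.1 i)]
  calc ‖x‖ = max ‖x.1‖ ‖x.2‖ := rfl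
    _ ≤ R := max_le h1 h2

lemma exists_unit (hn : 0 < n) : ∃ u : V n, Hst n u = 1 := by
  refine ⟨((Pi.single ⟨0, hn⟩ 1 : Fin n → ℝ), 0), ?_⟩
  unfold Hst
  simp [Pi.single_apply]

lemma sphere_scale (H : V n → ℝ) (hhom : ∀ l : ℝ, 0 < l → ∀ x, H (l • x) = l ^ 2 * H x)
    {x : V n} (hx : x ≠ 0) :
    ∃ u : V n, Hst n u = 1 ∧ u ≠ 0 ∧ H x = Hst n x * H u := by
  have hp : 0 < Hst n x := Hst_pos hx
  set s : ℝ := Real.sqrt (Hst n x) with hs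
  have hs0 : 0 < s := Real.sqrt_pos.2 hp
  refine ⟨(1/s) • x, ?_, ?_, ?_⟩
  · rw [Hst_smul]
    rw [hs]
    rw [div_pow]
    rw [Real.sq_sqrt hp.le]
    field_simp
  · intro hcon
    apply hx
    have := congrArg (fun y => s • y) hcon
    simpa [smul_smul, mul_div_cancel₀, hs0.ne'] using this
  · have hx' : x = s • ((1/s) • x) := by
      rw [smul_smul]
      rw [mul_one_div, div_self hs0.ne', one_smul]
    conv_lhs => rw [hx']
    rw [hhom s hs0, hs, Real.sq_sqrt hp.le]

lemma toReal_ball_vol (hn : 0 < n) {R : ℝ} (hR : 0 ≤ R) :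
    (volume {x : V n | Hst n x ≤ R ^ 2}).toReal = (π * R^2)^n / n.factorial := by
  rw [volume_Hst_le hn hR, ENNReal.toReal_mul, ENNReal.toReal_pow,
    ENNReal.toReal_ofReal hR, ENNReal.toReal_ofReal (by positivity)]
  rw [show n + n = 2 * n by ring, pow_mul, mul_pow, ← pow_mul, mul_comm 2 n, pow_mul]
  ring

lemma SV_of_sphere (hn : 0 < n) (H : V n → ℝ)
    (hsm : ContDiffOn ℝ (⊤ : ℕ∞) H {(0 : V n)}ᶜ)
    (hpos : ∀ x : V n, x ≠ 0 → 0 < H x)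
    (hhom : ∀ l : ℝ, 0 < l → ∀ x, H (l • x) = l ^ 2 * H x)
    {r : ℝ} (hr : 0 < r)
    (hiff : ∀ x : V n, H x = 1 ↔ Hst n x = r^2) :
    SV n H = 1/(n.factorial : ℝ) := by
  have hH0 : H 0 = 0 := H_zero H hhom
  have hr2 : (0:ℝ) < r^2 := by positivity
  -- H is the round Hamiltonian
  have hHr : ∀ x : V n, x ≠ 0 → H x = Hst n x / r^2 := by
    intro x hx
    obtain ⟨u, huS, hune, hxu⟩ := sphere_scale H hhom hx
    have hy : H (r • u) = 1 := by
      apply (hiff _).2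
      rw [Hst_smul, huS, mul_one]
    have hy2 : H (r • u) = r^2 * H u := hhom r hr u
    have hu : H u = 1 / r^2 := by
      rw [hy2] at hy
      field_simp at hy ⊢
      linear_combination hy
    rw [hxu, hu]
    field_simp
  have hle : ∀ x : V n, H x ≤ Hst n x / r^2 := by
    intro x
    rcases eq_or_ne x 0 with rfl | hx
    · simp [hH0, Hst_zero]
    · exact le_of_eq (hHr x hx)
  -- grad data at any nonzero point of the level set
  have hgrad : ∀ z : V n, z ≠ 0 → H z = 1 →
      (∀ i, pdq H z i = (2/r^2) * z.1 i) ∧ (∀ i, pdp H z i = (2/r^2) * z.2 i) := by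
    intro z hz h1
    apply grad_eq H hsm hr2 hz hle
    rw [h1, (hiff z).1 h1]
    field_simp
  -- membership
  obtain ⟨e, heS⟩ := exists_unit (n := n) hn
  have hmem : π * r^2 ∈ actions n H := by
    apply circle_mem_actions H hsm hhom hr2 (z₀ := r • e)
    · intro θ
      apply (hiff _).2
      rw [Hst_rot, Hst_smul, heS, mul_one]
    · intro θ i
      have hne : rot θ (r • e) ≠ 0 := by
        intro hcon
        have : Hst n (rot θ (r • e)) = r^2 := by rw [Hst_rot, Hst_smul, heS, mul_one]
        rw [hcon, Hst_zero] at this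
        exact absurd this.symm (by positivity)
      have h1 : H (rot θ (r • e)) = 1 := by
        apply (hiff _).2; rw [Hst_rot, Hst_smul, heS, mul_one]
      exact (hgrad _ hne h1).1 i
    · intro θ i
      have hne : rot θ (r • e) ≠ 0 := by
        intro hcon
        have : Hst n (rot θ (r • e)) = r^2 := by rw [Hst_rot, Hst_smul, heS, mul_one]
        rw [hcon, Hst_zero] at this
        exact absurd this.symm (by positivity)
      have h1 : H (rot θ (r • e)) = 1 := by
        apply (hiff _).2; rw [Hst_rot, Hst_smul, heS, mul_one]
      exact (hgrad _ hne h1).2 i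
  -- lower bound for all actions
  have hlb : ∀ A ∈ actions n H, π * r^2 ≤ A := by
    rintro A ⟨T, γ, hT, hγ, hH1, hTT, hA⟩
    have hne : ∀ t, γ t ≠ 0 := by
      intro t h
      have := hH1 t
      rw [h, hH0] at this
      norm_num at this
    have hAT : A = T := by rw [hA, action_eq_period H hsm hhom hγ hH1]
    set ω : ℝ := 2/r^2 with hω
    have hωpos : 0 < ω := by positivity
    have hd' : ∀ t, HasDerivAt γ
        ((fun i => ω * (γ t).2 i, fun i => -(ω * (γ t).1 i)) : V n) t := by
      intro t
      have hg := hgrad (γ t) (hne t) (hH1 t)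
      have hXH : XH H (γ t)
          = ((fun i => ω * (γ t).2 i, fun i => -(ω * (γ t).1 i)) : V n) := by
        unfold XH
        refine Prod.ext ?_ ?_ <;> funext i
        · simp only [hg.2 i, hω]
        · simp only [hg.1 i, hω]
      rw [← hXH]
      exact hγ t
    have hrig := rotation_rigidity hωpos hT hd' (hne 0) hTT
    have h6 : (2 / r^2) * T * r^2 = 2 * T := by field_simp
    have h5 : 2 * π * r^2 ≤ (2 / r^2) * T * r^2 :=
      mul_le_mul_of_nonneg_right hrig hr2.le
    rw [hAT]
    nlinarith
  -- systole
  have hsys : sys n H = π * r^2 := by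
    unfold sys
    apply le_antisymm
    · exact csInf_le ⟨π * r^2, hlb⟩ hmem
    · exact le_csInf ⟨π * r^2, hmem⟩ hlb
  -- volume
  have hset : {x : V n | H x ≤ 1} = {x : V n | Hst n x ≤ r^2} := by
    ext x
    rcases eq_or_ne x 0 with rfl | hx
    · simp only [Set.mem_setOf_eq, hH0, Hst_zero]
      constructor <;> intro <;> positivity
    · simp only [Set.mem_setOf_eq, hHr x hx]
      rw [div_le_one hr2]
  have hvol : vol n H = (π * r^2)^n / n.factorial := by
    unfold vol
    rw [hset, ← toReal_ball_vol hn hr.le]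
  -- conclude
  unfold SV
  rw [hvol, hsys]
  have hpr : (π * r^2)^n ≠ 0 := by positivity
  field_simp
end S19

open S19


/-- if `Σ = {H = 1}` is a compact smooth starshaped hypersurface of
`ℝ^{2n}` invariant under the flow of `H_st` (equivalently `Σ` bounds a circular
domain, `e^{iθ}K = K`), then `𝔖(Σ) ≥ 1/n!`, with equality iff `Σ` is a round
sphere centred at the origin. Invariance under the `H_st`-flow is expressed as
invariance of `H` under the circle action `z ↦ e^{-iθ}z` on `ℂⁿ ≅ ℝ^{2n}`. -/
theorem stmt19 (n : ℕ) (hn : 0 < n) (H : V n → ℝ)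
    (hsm : ContDiffOn ℝ (⊤ : ℕ∞) H {(0 : V n)}ᶜ)
    (hpos : ∀ x : V n, x ≠ 0 → 0 < H x)
    (hhom : ∀ l : ℝ, 0 < l → ∀ x, H (l • x) = l ^ 2 * H x)
    (hinv : ∀ θ : ℝ, ∀ q p : Fin n → ℝ,
      H (Real.cos θ • q + Real.sin θ • p, Real.cos θ • p - Real.sin θ • q) = H (q, p)) :
    1 / (n.factorial : ℝ) ≤ SV n H ∧
    (SV n H = 1 / (n.factorial : ℝ) ↔
      ∃ r : ℝ, 0 < r ∧ ∀ x : V n, (H x = 1 ↔ Hst n x = r ^ 2)) := by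
  classical
  have hH0 : H 0 = 0 := H_zero H hhom
  have hfact : (0:ℝ) < n.factorial := by exact_mod_cast n.factorial_pos
  -- extrema of H on the unit sphere
  set S : Set (V n) := {u : V n | Hst n u = 1} with hSdef
  have hSsub : S ⊆ {(0 : V n)}ᶜ := by
    intro u hu
    simp only [hSdef, Set.mem_setOf_eq] at hu
    intro h0
    rw [Set.mem_singleton_iff] at h0
    rw [h0, Hst_zero] at hu
    norm_num at hu
  have hSclosed : IsClosed S := isClosed_eq continuous_Hst continuous_const
  have hSbdd : Bornology.IsBounded S := by
    apply (Metric.isBounded_iff_subset_closedBall 0).2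
    refine ⟨1, fun u hu => ?_⟩
    simp only [hSdef, Set.mem_setOf_eq] at hu
    rw [Metric.mem_closedBall, dist_zero_right]
    exact norm_le_of_Hst zero_le_one (by rw [hu]; norm_num)
  have hScpt : IsCompact S := Metric.isCompact_of_isClosed_isBounded hSclosed hSbdd
  obtain ⟨e, heS⟩ := exists_unit (n := n) hn
  have hSne : S.Nonempty := ⟨e, heS⟩
  have hHcont : ContinuousOn H S := hsm.continuousOn.mono hSsub
  obtain ⟨u₀, hu₀S, hmax⟩ := hScpt.exists_isMaxOn hSne hHcont
  obtain ⟨v₀, hv₀S, hmin⟩ := hScpt.exists_isMinOn hSne hHcont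
  have hmax' : ∀ u ∈ S, H u ≤ H u₀ := fun u hu => hmax hu
  have hmin' : ∀ u ∈ S, H v₀ ≤ H u := fun u hu => hmin hu
  have hu₀ne : u₀ ≠ 0 := fun h => hSsub hu₀S (by rw [h]; rfl)
  have hv₀ne : v₀ ≠ 0 := fun h => hSsub hv₀S (by rw [h]; rfl)
  set M : ℝ := H u₀ with hMdef
  set m : ℝ := H v₀ with hmdef
  have hM : 0 < M := hpos _ hu₀ne
  have hm : 0 < m := hpos _ hv₀ne
  set c : ℝ := 1 / M with hcdef
  have hc : 0 < c := by positivity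
  have hcM : c * M = 1 := by rw [hcdef]; field_simp
  -- global two-sided homogeneous bounds
  have hle : ∀ x : V n, H x ≤ Hst n x / c := by
    intro x
    rcases eq_or_ne x 0 with rfl | hx
    · simp [hH0, Hst_zero]
    · obtain ⟨u, huS, hune, hxu⟩ := sphere_scale H hhom hx
      have h1 : H u ≤ M := hmax' u huS
      have h2 : Hst n x / c = Hst n x * M := by rw [hcdef]; field_simp
      rw [hxu, h2]
      exact mul_le_mul_of_nonneg_left h1 (Hst_nonneg x)
  have hge : ∀ x : V n, Hst n x * m ≤ H x := by
    intro x
    rcases eq_or_ne x 0 with rfl | hx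
    · simp [hH0, Hst_zero]
    · obtain ⟨u, huS, hune, hxu⟩ := sphere_scale H hhom hx
      have h1 : m ≤ H u := hmin' u huS
      rw [hxu]
      exact mul_le_mul_of_nonneg_left h1 (Hst_nonneg x)
  -- the level set is compact
  set Sig : Set (V n) := {z : V n | H z = 1} with hSigdef
  set C : Set (V n) := {z : V n | c ≤ Hst n z} with hCdef
  have hCclosed : IsClosed C := isClosed_le continuous_const continuous_Hst
  have hCsub : C ⊆ {(0 : V n)}ᶜ := by
    intro z hz
    simp only [hCdef, Set.mem_setOf_eq] at hz
    intro h0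
    rw [Set.mem_singleton_iff] at h0
    rw [h0, Hst_zero] at hz
    linarith
  have hSigubC : Sig ⊆ C := by
    intro z hz
    simp only [hSigdef, Set.mem_setOf_eq] at hz
    simp only [hCdef, Set.mem_setOf_eq]
    have := hle z
    rw [hz] at this
    exact (one_le_div hc).1 this
  have hSigeq : Sig = C ∩ H ⁻¹' {1} := by
    ext z
    constructor
    · intro hz
      exact ⟨hSigubC hz, hz⟩
    · rintro ⟨_, hz⟩
      exact hz
  have hSigclosed : IsClosed Sig := by
    rw [hSigeq]
    exact ContinuousOn.preimage_isClosed_of_isClosed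
      (hsm.continuousOn.mono hCsub) hCclosed isClosed_singleton
  have hSigbdd : Bornology.IsBounded Sig := by
    apply (Metric.isBounded_iff_subset_closedBall 0).2
    refine ⟨Real.sqrt (1/m), fun z hz => ?_⟩
    simp only [hSigdef, Set.mem_setOf_eq] at hz
    rw [Metric.mem_closedBall, dist_zero_right]
    apply norm_le_of_Hst (Real.sqrt_nonneg _)
    rw [Real.sq_sqrt (by positivity : (0:ℝ) ≤ 1/m)]
    have := hge z
    rw [hz] at this
    rw [le_div_iff₀ hm]
    linarith
  have hSigcpt : IsCompact Sig := Metric.isCompact_of_isClosed_isBounded hSigclosed hSigbdd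
  -- bound on XH over the level set
  obtain ⟨K₀, hK₀⟩ := hSigcpt.exists_bound_of_continuousOn
    ((XH_contOn H hsm).mono (hSigubC.trans hCsub))
  set K : ℝ := max K₀ 1 with hKdef
  have hK : 0 < K := lt_of_lt_of_le zero_lt_one (le_max_right _ _)
  have hbdK : ∀ z : V n, H z = 1 → ‖XH H z‖ ≤ K := by
    intro z hz
    exact le_trans (hK₀ z hz) (le_max_left _ _)
  have hlbA := actions_lower_bound H hsm hhom hK hbdK (XH_contOn H hsm)
  set δ : ℝ := 2 / ((n+1) * K^2) with hδdef
  have hδ : 0 < δ := by positivity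
  -- the minimal circle gives an action value
  set z₀ : V n := Real.sqrt c • u₀ with hz₀def
  have hsc : (0:ℝ) < Real.sqrt c := Real.sqrt_pos.2 hc
  have hz₀Hst : Hst n z₀ = c := by
    rw [hz₀def, Hst_smul, Real.sq_sqrt hc.le]
    have : Hst n u₀ = 1 := hu₀S
    rw [this, mul_one]
  have hz₀H : H z₀ = 1 := by
    rw [hz₀def, hhom _ hsc, Real.sq_sqrt hc.le]
    have : H u₀ = M := rfl
    rw [this, hcM]
  have hrotH : ∀ θ : ℝ, H (rot θ z₀) = 1 := by
    intro θ
    have h1 : H (rot θ z₀) = H (z₀.1, z₀.2) := hinv θ z₀.1 z₀.2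
    rw [h1]
    exact hz₀H
  have hrotHst : ∀ θ : ℝ, Hst n (rot θ z₀) = c := by
    intro θ; rw [Hst_rot, hz₀Hst]
  have hrotne : ∀ θ : ℝ, rot θ z₀ ≠ 0 := by
    intro θ h0
    have := hrotHst θ
    rw [h0, Hst_zero] at this
    linarith
  have hgrad : ∀ θ : ℝ,
      (∀ i, pdq H (rot θ z₀) i = (2/c) * (rot θ z₀).1 i) ∧
      (∀ i, pdp H (rot θ z₀) i = (2/c) * (rot θ z₀).2 i) := by
    intro θ
    apply grad_eq H hsm hc (hrotne θ) hle
    rw [hrotH θ, hrotHst θ]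
    field_simp
  have hmemA : π * c ∈ actions n H :=
    circle_mem_actions H hsm hhom hc hrotH (fun θ i => (hgrad θ).1 i) (fun θ i => (hgrad θ).2 i)
  -- systole bounds
  have hAne : (actions n H).Nonempty := ⟨π * c, hmemA⟩
  have hAbdd : BddBelow (actions n H) := ⟨δ, fun A hA => hlbA A hA⟩
  have hsys_pos : 0 < sys n H := lt_of_lt_of_le hδ (le_csInf hAne (fun A hA => hlbA A hA))
  have hsys_le : sys n H ≤ π * c := csInf_le hAbdd hmemA
  have hπc : (0:ℝ) < π * c := by positivity
  -- volume bounds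
  set B : Set (V n) := {x : V n | Hst n x ≤ c} with hBdef
  have hBsq : B = {x : V n | Hst n x ≤ Real.sqrt c ^ 2} := by
    rw [hBdef, Real.sq_sqrt hc.le]
  have hBsub : B ⊆ {x : V n | H x ≤ 1} := by
    intro x hx
    simp only [hBdef, Set.mem_setOf_eq] at hx
    simp only [Set.mem_setOf_eq]
    calc H x ≤ Hst n x / c := hle x
      _ ≤ c / c := by gcongr
      _ = 1 := div_self hc.ne'
  have hKfin : volume {x : V n | H x ≤ 1} ≠ ⊤ := by
    have hsub : {x : V n | H x ≤ 1} ⊆ {x : V n | Hst n x ≤ Real.sqrt (1/m) ^ 2} := by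
      intro x hx
      simp only [Set.mem_setOf_eq] at hx ⊢
      rw [Real.sq_sqrt (by positivity : (0:ℝ) ≤ 1/m)]
      have := hge x
      rw [le_div_iff₀ hm]
      linarith
    apply ne_top_of_le_ne_top ?_ (measure_mono hsub)
    rw [volume_Hst_le hn (Real.sqrt_nonneg _)]
    exact ENNReal.mul_ne_top (by simp [ENNReal.pow_ne_top, ENNReal.ofReal_ne_top])
      ENNReal.ofReal_ne_top
  have hvol_ge : (π * c)^n / n.factorial ≤ vol n H := by
    have h1 : (volume B).toReal ≤ vol n H := by
      unfold vol
      exact ENNReal.toReal_mono hKfin (measure_mono hBsub)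
    have h2 : (volume B).toReal = (π * (Real.sqrt c)^2)^n / n.factorial := by
      rw [hBsq]
      exact toReal_ball_vol hn (Real.sqrt_nonneg _)
    rw [h2, Real.sq_sqrt hc.le] at h1
    exact h1
  have hvol_nonneg : 0 ≤ vol n H := ENNReal.toReal_nonneg
  -- main inequality
  have hsysn_pos : 0 < (sys n H)^n := pow_pos hsys_pos n
  have hsysn_le : (sys n H)^n ≤ (π * c)^n := pow_le_pow_left₀ hsys_pos.le hsys_le n
  have hmain : 1 / (n.factorial : ℝ) ≤ SV n H := by
    unfold SV
    have e1 : 1 / (n.factorial : ℝ) = ((π * c)^n / n.factorial) / (π * c)^n := by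
      field_simp
    rw [e1]
    calc ((π * c)^n / n.factorial) / (π * c)^n ≤ vol n H / (π * c)^n := by
          gcongr
      _ ≤ vol n H / (sys n H)^n := by
          gcongr
  refine ⟨hmain, ?_, ?_⟩
  · -- equality implies sphere
    intro hSV
    unfold SV at hSV
    have hvolval : vol n H = (π * c)^n / n.factorial := by
      have h1 : vol n H * n.factorial = (sys n H)^n := by
        field_simp at hSV
        linarith [hSV]
      have h2 : (π * c)^n ≤ vol n H * n.factorial := by
        rw [div_le_iff₀ hfact] at hvol_ge
        linarith
      have h3 : (sys n H)^n = (π * c)^n := le_antisymm (by rw [← h1] at hsysn_le ⊢; linarith) (by linarith [h1 ▸ h2])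
      rw [eq_div_iff hfact.ne']
      rw [h1, h3]
    -- volume equality forces H constant on the sphere
    have hμeq : volume {x : V n | H x ≤ 1} = volume B := by
      have hBfin : volume B ≠ ⊤ := ne_top_of_le_ne_top hKfin (measure_mono hBsub)
      have h2 : (volume B).toReal = (π * c)^n / n.factorial := by
        rw [hBsq, toReal_ball_vol hn (Real.sqrt_nonneg _), Real.sq_sqrt hc.le]
      have h3 : (volume {x : V n | H x ≤ 1}).toReal = (volume B).toReal := by
        rw [h2]
        exact hvolval ▸ rfl
      exact (ENNReal.toReal_eq_toReal_iff' hKfin hBfin).1 h3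
    have hallmax : ∀ u : V n, Hst n u = 1 → H u = M := by
      intro u huS
      by_contra hne
      have hune : u ≠ 0 := by
        intro h0; rw [h0, Hst_zero] at huS; norm_num at huS
      have hb : 0 < H u := hpos u hune
      have hblt : H u < M := lt_of_le_of_ne (hmax' u huS) hne
      set b : ℝ := H u with hbdef
      have hcb : c < 1 / b := by
        rw [hcdef]
        exact one_div_lt_one_div_of_lt hb hblt
      set s : ℝ := Real.sqrt ((c + 1/b)/2) with hsdef
      have hs2 : s^2 = (c + 1/b)/2 := Real.sq_sqrt (by positivity)
      have hs2c : c < s^2 := by rw [hs2]; linarith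
      have hs2b : s^2 < 1/b := by rw [hs2]; linarith
      have hspos : 0 < s := Real.sqrt_pos.2 (by positivity)
      set W : Set (V n) := {x : V n | c < Hst n x} ∩ ({(0:V n)}ᶜ ∩ H ⁻¹' (Set.Iio 1))
        with hWdef
      have hWopen : IsOpen W := by
        apply IsOpen.inter
        · exact isOpen_lt continuous_const continuous_Hst
        · exact hsm.continuousOn.isOpen_inter_preimage isOpen_compl_singleton isOpen_Iio
      have hWne : W.Nonempty := by
        refine ⟨s • u, ?_, ?_, ?_⟩
        · simp only [Set.mem_setOf_eq, Hst_smul, huS, mul_one]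
          exact hs2c
        · intro h0
          rw [Set.mem_singleton_iff] at h0
          have := congrArg (Hst n) h0
          rw [Hst_smul, huS, mul_one, Hst_zero] at this
          nlinarith
        · simp only [Set.mem_preimage, Set.mem_Iio, hhom s hspos, ← hbdef]
          calc s^2 * b < (1/b) * b := by
                apply mul_lt_mul_of_pos_right hs2b hb
            _ = 1 := by field_simp
      have hWsub : W ⊆ {x : V n | H x ≤ 1} := by
        rintro x ⟨_, _, hx2⟩
        exact le_of_lt (by simpa using hx2)
      have hdisj : Disjoint B W := by
        rw [Set.disjoint_left]
        rintro x hxB ⟨hxW, _⟩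
        simp only [hBdef, Set.mem_setOf_eq] at hxB
        simp only [Set.mem_setOf_eq] at hxW
        linarith
      have hunion : volume B + volume W ≤ volume {x : V n | H x ≤ 1} := by
        rw [← measure_union hdisj hWopen.measurableSet]
        exact measure_mono (Set.union_subset hBsub hWsub)
      have hWpos : 0 < volume W := hWopen.measure_pos volume hWne
      rw [hμeq] at hunion
      have hBfin : volume B ≠ ⊤ := ne_top_of_le_ne_top hKfin (measure_mono hBsub)
      have : volume W ≤ 0 := by
        have h5 : volume B + volume W ≤ volume B + 0 := by
          rw [add_zero]; exact hunion
        exact ENNReal.le_of_add_le_add_left hBfin h5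
      exact absurd (le_antisymm this (zero_le)) hWpos.ne'
    -- conclude roundness
    refine ⟨Real.sqrt c, hsc, ?_⟩
    intro x
    have hrsq : Real.sqrt c ^ 2 = c := Real.sq_sqrt hc.le
    rw [hrsq]
    rcases eq_or_ne x 0 with rfl | hx
    · rw [hH0, Hst_zero]
      constructor
      · intro h; norm_num at h
      · intro h; exact absurd h.symm hc.ne'
    · obtain ⟨u, huS, hune, hxu⟩ := sphere_scale H hhom hx
      rw [hxu, hallmax u huS]
      constructor
      · intro h
        have : Hst n x = 1 / M := by
          field_simp at h ⊢
          linarith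
        rw [this, hcdef]
      · intro h
        rw [h, hcdef]
        field_simp
  · -- sphere implies equality
    rintro ⟨r, hr, hiff⟩
    exact SV_of_sphere hn H hsm hpos hhom hr hiff
end
end
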